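/- arXiv:1401.3309 — 3 statements merged into one kernel-verified Lean document; each statement's English description precedes it below -/
import Mathlib

section
/- Every divisor D of degree g − 1 on a finite connected simple graph G is linearly equivalent to an orientable divisor, i.e., there exists a full orientation O of G with D ~ D_O. -/
/-- A partial orientation of a simple graph `G`: each edge of some subset of the
edges of `G` is given a direction; `dir u v = true` means the edge `{u,v}` is
oriented from `u` towards `v`. -/
structure PartialOrientation {V : Type*} (G : SimpleGraph V) where
  dir : V → V → Bool
  adj_of_dir : ∀ u v, dir u v = true → G.Adj u v
  not_both : ∀ u v, dir u v = true → dir v u = false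

namespace PartialOrientation

variable {V : Type*} {G : SimpleGraph V}

/-- The indegree of a vertex in a partial orientation. -/
def indeg [Fintype V] (O : PartialOrientation G) (v : V) : ℕ :=
  (Finset.univ.filter (fun u => O.dir u v = true)).card

/-- The divisor associated to a partial orientation: `D_O(v) = indeg(v) - 1`. -/
def div [Fintype V] (O : PartialOrientation G) (v : V) : ℤ :=
  (O.indeg v : ℤ) - 1

/-- A partial orientation is acyclic if it has no directed cycle (equivalently,
no vertex reaches itself by a nonempty directed walk). -/
def Acyclic (O : PartialOrientation G) : Prop :=
  ∀ v, ¬ Relation.TransGen (fun a b => O.dir a b = true) v v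

/-- A partial orientation is sourceless if every vertex has an incoming oriented edge. -/
def Sourceless (O : PartialOrientation G) : Prop :=
  ∀ v, ∃ u, O.dir u v = true

/-- A partial orientation is `q`-connected if every vertex is reachable from `q`
by a (possibly empty) directed path. -/
def QConnected (O : PartialOrientation G) (q : V) : Prop :=
  ∀ v, Relation.ReflTransGen (fun a b => O.dir a b = true) q v

/-- A partial orientation is full if every edge of `G` is oriented. -/
def IsFull (O : PartialOrientation G) : Prop :=
  ∀ u v, G.Adj u v → (O.dir u v = true ∨ O.dir v u = true)

/-- An edge pivot at a vertex `v`: an edge oriented towards `v` becomes unoriented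
and a previously unoriented edge incident to `v` becomes oriented towards `v`. -/
def EdgePivot (O O' : PartialOrientation G) : Prop :=
  ∃ v u w, O.dir u v = true ∧ G.Adj w v ∧ O.dir w v = false ∧ O.dir v w = false ∧
    ∀ a b, (O'.dir a b = true ↔
      ((a = w ∧ b = v) ∨ (O.dir a b = true ∧ ¬(a = u ∧ b = v))))

/-- A cycle reversal: all edges of a consistently oriented (directed) cycle are reversed. -/
def CycleReversal (O O' : PartialOrientation G) : Prop :=
  ∃ (n : ℕ) (σ : Fin (n + 1) → V), Function.Injective σ ∧
    (∀ i : Fin (n + 1), O.dir (σ i) (σ (i + 1)) = true) ∧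
    ∀ a b, (O'.dir a b = true ↔
      ((∃ i : Fin (n + 1), a = σ (i + 1) ∧ b = σ i) ∨
        (O.dir a b = true ∧ ¬ ∃ i : Fin (n + 1), a = σ i ∧ b = σ (i + 1))))

/-- A directed path reversal: all edges of a directed path are reversed. -/
def PathReversal (O O' : PartialOrientation G) : Prop :=
  ∃ (n : ℕ) (σ : Fin (n + 1) → V), Function.Injective σ ∧
    (∀ i : Fin n, O.dir (σ i.castSucc) (σ i.succ) = true) ∧
    ∀ a b, (O'.dir a b = true ↔
      ((∃ i : Fin n, a = σ i.succ ∧ b = σ i.castSucc) ∨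
        (O.dir a b = true ∧ ¬ ∃ i : Fin n, a = σ i.castSucc ∧ b = σ i.succ)))

/-- A cocycle (cut) reversal: all edges of a cut `(S, V∖S)` in which every edge of
the cut is oriented, all towards `S`, are reversed. -/
def CocycleReversal (O O' : PartialOrientation G) : Prop :=
  ∃ S : Set V,
    (∀ u v, G.Adj u v → u ∉ S → v ∈ S → O.dir u v = true) ∧
    ∀ a b, (O'.dir a b = true ↔
      ((a ∈ S ∧ b ∉ S ∧ O.dir b a = true) ∨
        ((a ∈ S ↔ b ∈ S) ∧ O.dir a b = true)))

/-- Equivalence in the generalized cycle reversal system: a finite sequence of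
edge pivots and cycle reversals. -/
def GenCycleEquiv (O O' : PartialOrientation G) : Prop :=
  Relation.ReflTransGen (fun A B => EdgePivot A B ∨ CycleReversal A B) O O'

/-- Equivalence in the generalized cocycle reversal system: a finite sequence of
edge pivots and cocycle reversals. -/
def GenCocycleEquiv (O O' : PartialOrientation G) : Prop :=
  Relation.ReflTransGen (fun A B => EdgePivot A B ∨ CocycleReversal A B) O O'

/-- Equivalence in the generalized cycle-cocycle reversal system: a finite sequence
of edge pivots, cycle reversals and cocycle reversals. -/
def GenCycleCocycleEquiv (O O' : PartialOrientation G) : Prop :=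
  Relation.ReflTransGen
    (fun A B => EdgePivot A B ∨ CycleReversal A B ∨ CocycleReversal A B) O O'

/-- Equivalence in the (plain) cocycle reversal system: a finite sequence of
cocycle reversals. -/
def CocycleEquiv (O O' : PartialOrientation G) : Prop :=
  Relation.ReflTransGen (fun A B => CocycleReversal A B) O O'

end PartialOrientation

/-- The degree of a divisor: the total number of chips. -/
def degDiv {V : Type*} [Fintype V] (D : V → ℤ) : ℤ := ∑ v, D v

/-- `deg⁺` of a divisor: the sum of its positive values. -/
def degPlus {V : Type*} [Fintype V] (D : V → ℤ) : ℤ := ∑ v, max (D v) 0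

/-- A divisor is effective if all of its values are nonnegative. -/
def EffectiveDiv {V : Type*} (D : V → ℤ) : Prop := ∀ v, 0 ≤ D v

/-- Linear equivalence of divisors: `D - D'` lies in the ℤ-span of the columns of
the Laplacian, i.e. there is an integral firing vector `f` with
`D - D' = Δ f`. -/
def LinEquiv {V : Type*} [Fintype V] (G : SimpleGraph V) [DecidableRel G.Adj]
    (D D' : V → ℤ) : Prop :=
  ∃ f : V → ℤ, ∀ v, D v - D' v = ∑ u ∈ Finset.univ.filter (fun u => G.Adj v u), (f v - f u)

/-- The Baker–Norine rank of a divisor: one less than the minimal degree of an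
effective divisor `E` such that `D - E` is not linearly equivalent to any
effective divisor.  In particular `divisorRank G D = -1` iff `D` is not linearly
equivalent to an effective divisor. -/
noncomputable def divisorRank {V : Type*} [Fintype V] (G : SimpleGraph V)
    [DecidableRel G.Adj] (D : V → ℤ) : ℤ :=
  ((sInf { n : ℕ | ∃ E : V → ℤ, EffectiveDiv E ∧ degDiv E = (n : ℤ) ∧
      ¬ ∃ E' : V → ℤ, EffectiveDiv E' ∧ LinEquiv G (fun v => D v - E v) E' } : ℕ) : ℤ) - 1

/-- The genus (cyclomatic number) of a graph: `g = |E| - |V| + 1`. -/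
def graphGenus {V : Type*} [Fintype V] [DecidableEq V] (G : SimpleGraph V)
    [DecidableRel G.Adj] : ℤ :=
  (G.edgeFinset.card : ℤ) - (Fintype.card V : ℤ) + 1

/-- The number of edges of the induced subgraph `G[T]`. -/
def inducedEdgeCount {V : Type*} [Fintype V] [DecidableEq V] (G : SimpleGraph V)
    [DecidableRel G.Adj] (T : Finset V) : ℕ :=
  (G.edgeFinset.filter (fun e => e ∈ T.sym2)).card

/-- `χ̄(S, D) = |E| - |E(G[V∖S])| - |S| - deg(D|_S)`. -/
def chiBar {V : Type*} [Fintype V] [DecidableEq V] (G : SimpleGraph V)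
    [DecidableRel G.Adj] (D : V → ℤ) (S : Finset V) : ℤ :=
  (G.edgeFinset.card : ℤ) - (inducedEdgeCount G Sᶜ : ℤ) - (S.card : ℤ) - ∑ v ∈ S, D v

/-- `outdeg_A(v)`: the number of edges joining `v` to vertices outside `A`. -/
def outdegOf {V : Type*} [Fintype V] [DecidableEq V] (G : SimpleGraph V) [DecidableRel G.Adj]
    (A : Finset V) (v : V) : ℕ :=
  (Finset.univ.filter (fun u => G.Adj v u ∧ u ∉ A)).card

/-- A divisor `D` is `q`-reduced if `D(v) ≥ 0` for `v ≠ q` and every nonempty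
set `A ⊆ V ∖ {q}` contains a vertex sent into debt by firing `A`. -/
def QReduced {V : Type*} [Fintype V] [DecidableEq V] (G : SimpleGraph V) [DecidableRel G.Adj]
    (q : V) (D : V → ℤ) : Prop :=
  (∀ v, v ≠ q → 0 ≤ D v) ∧
    ∀ A : Finset V, A.Nonempty → q ∉ A → ∃ v ∈ A, D v - (outdegOf G A v : ℤ) < 0

/-- The canonical divisor `K(v) = deg(v) - 2`. -/
def canonicalDiv {V : Type*} [Fintype V] (G : SimpleGraph V) [DecidableRel G.Adj]
    (v : V) : ℤ :=
  (G.degree v : ℤ) - 2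


section Stmt7Proof

open Finset

variable {V : Type*} [Fintype V] [DecidableEq V] {G : SimpleGraph V} [DecidableRel G.Adj]

private def ind (u : V) : V → ℤ := fun x => if x = u then 1 else 0

private lemma linEquiv_refl (D : V → ℤ) : LinEquiv G D D :=
  ⟨fun _ => 0, fun v => by simp⟩

private lemma linEquiv_congr {A A' B B' : V → ℤ} (hA : ∀ x, A x = A' x)
    (hB : ∀ x, B x = B' x) (h : LinEquiv G A B) : LinEquiv G A' B' := by
  obtain ⟨f, hf⟩ := h
  exact ⟨f, fun v => by rw [← hA, ← hB]; exact hf v⟩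

private lemma linEquiv_trans {A B C : V → ℤ} (h1 : LinEquiv G A B) (h2 : LinEquiv G B C) :
    LinEquiv G A C := by
  obtain ⟨f, hf⟩ := h1; obtain ⟨g, hg⟩ := h2
  refine ⟨fun v => f v + g v, fun v => ?_⟩
  rw [show A v - C v = (A v - B v) + (B v - C v) by ring, hf v, hg v, ← Finset.sum_add_distrib]
  exact Finset.sum_congr rfl fun u _ => by ring

private lemma linEquiv_add_right {A B : V → ℤ} (C : V → ℤ) (h : LinEquiv G A B) :
    LinEquiv G (fun v => A v + C v) (fun v => B v + C v) := by
  obtain ⟨f, hf⟩ := h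
  exact ⟨f, fun v => by rw [show A v + C v - (B v + C v) = A v - B v by ring]; exact hf v⟩

private lemma card_filter_cast (p : V → Prop) [DecidablePred p] :
    (((Finset.univ.filter p).card : ℤ)) = ∑ x, if p x then (1:ℤ) else 0 := by
  rw [Finset.card_filter]
  push_cast
  rfl

private lemma indeg_cast (O : PartialOrientation G) (v : V) :
    ((O.indeg v : ℤ)) = ∑ x, if O.dir x v = true then (1:ℤ) else 0 :=
  card_filter_cast _

private def revEdge (O : PartialOrientation G) (u w : V) (h : O.dir u w = true) :
    PartialOrientation G where
  dir a b := if a = w ∧ b = u then true else if a = u ∧ b = w then false else O.dir a b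
  adj_of_dir a b hd := by
    by_cases h1 : a = w ∧ b = u
    · obtain ⟨rfl, rfl⟩ := h1
      exact (O.adj_of_dir _ _ h).symm
    · simp only [if_neg h1] at hd
      by_cases h2 : a = u ∧ b = w
      · simp [h2] at hd
      · simp only [if_neg h2] at hd
        exact O.adj_of_dir _ _ hd
  not_both a b hd := by
    have hne : u ≠ w := (O.adj_of_dir u w h).ne
    by_cases h1 : a = w ∧ b = u
    · obtain ⟨rfl, rfl⟩ := h1
      simp [hne, Ne.symm hne]
    · simp only [if_neg h1] at hd
      by_cases h2 : a = u ∧ b = w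
      · simp [h2] at hd
      · simp only [if_neg h2] at hd
        have k1 : ¬(b = w ∧ a = u) := fun hh => h2 ⟨hh.2, hh.1⟩
        have k2 : ¬(b = u ∧ a = w) := fun hh => h1 ⟨hh.2, hh.1⟩
        simp only [if_neg k1, if_neg k2]
        exact O.not_both a b hd

private lemma revEdge_dir (O : PartialOrientation G) (u w : V) (h : O.dir u w = true)
    (a b : V) : (revEdge O u w h).dir a b =
      if a = w ∧ b = u then true else if a = u ∧ b = w then false else O.dir a b := rfl

private lemma revEdge_isFull {O : PartialOrientation G} {u w : V} {h : O.dir u w = true}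
    (hO : O.IsFull) : (revEdge O u w h).IsFull := by
  intro a b hab
  by_cases h1 : a = w ∧ b = u
  · left; simp [revEdge_dir, h1]
  · by_cases h2 : a = u ∧ b = w
    · right; simp [revEdge_dir, h2]
    · have k1 : ¬(b = w ∧ a = u) := fun hh => h2 ⟨hh.2, hh.1⟩
      have k2 : ¬(b = u ∧ a = w) := fun hh => h1 ⟨hh.2, hh.1⟩
      rcases hO a b hab with hd | hd
      · left; simp [revEdge_dir, h1, h2, hd]
      · right; simp [revEdge_dir, k1, k2, hd]

private lemma revEdge_div (O : PartialOrientation G) (u w : V) (h : O.dir u w = true)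
    (x : V) : (revEdge O u w h).div x = O.div x + ind u x - ind w x := by
  have hne : u ≠ w := (O.adj_of_dir u w h).ne
  have hwu : O.dir w u = false := O.not_both u w h
  have key : ∀ a, (if (revEdge O u w h).dir a x = true then (1:ℤ) else 0)
      = (if O.dir a x = true then (1:ℤ) else 0)
        + (if a = w then ind u x else 0) - (if a = u then ind w x else 0) := by
    intro a
    rw [revEdge_dir]
    unfold ind
    by_cases haw : a = w <;> by_cases hau : a = u <;>
      by_cases hxu : x = u <;> by_cases hxw : x = w <;>
      simp_all
  unfold PartialOrientation.div
  rw [indeg_cast, indeg_cast, Finset.sum_congr rfl (fun a _ => key a)]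
  rw [Finset.sum_sub_distrib, Finset.sum_add_distrib, Finset.sum_ite_eq', Finset.sum_ite_eq']
  simp only [Finset.mem_univ, if_pos]
  ring

private inductive RW (O : PartialOrientation G) : ℕ → V → V → Prop
  | refl (v : V) : RW O 0 v v
  | step {a b c : V} {n : ℕ} : O.dir a b = true → RW O n b c → RW O (n+1) a c

private lemma rw_rev (O : PartialOrientation G) {u w : V} (h : O.dir u w = true) {v : V} :
    ∀ {n a}, RW O n a v → (∃ m ≤ n, RW O m u v) ∨ RW (revEdge O u w h) n a v := by
  intro n a hw
  induction hw with
  | refl x => exact Or.inr (RW.refl x)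
  | @step a b c n hd hrest ih =>
    by_cases hau : a = u
    · subst hau
      exact Or.inl ⟨n + 1, le_refl _, RW.step hd hrest⟩
    · rcases ih with ⟨m, hm, hmw⟩ | h'
      · exact Or.inl ⟨m, hm.trans (Nat.le_succ _), hmw⟩
      · refine Or.inr (RW.step ?_ h')
        rw [revEdge_dir]
        by_cases h1 : a = w ∧ b = u
        · simp [h1]
        · have h2 : ¬(a = u ∧ b = w) := fun hh => hau hh.1
          simp [h1, h2, hd]

private lemma exists_full_of_rw :
    ∀ n (O : PartialOrientation G) (u v : V), O.IsFull → RW O n u v →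
      ∃ O' : PartialOrientation G, O'.IsFull ∧ ∀ x, O'.div x = O.div x + ind u x - ind v x := by
  intro n
  induction n using Nat.strong_induction_on with
  | _ n IH =>
    intro O u v hO hw
    cases hw with
    | refl => exact ⟨O, hO, fun x => by ring⟩
    | @step _ w _ n' hd hrest =>
      rcases rw_rev O hd hrest with ⟨m, hm, hmw⟩ | h'
      · exact IH m (Nat.lt_succ_of_le hm) O u v hO hmw
      · obtain ⟨O', hO', hdiv⟩ :=
          IH n' (Nat.lt_succ_self _) (revEdge O u w hd) w v (revEdge_isFull hO) h'
        refine ⟨O', hO', fun x => ?_⟩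
        rw [hdiv x, revEdge_div]
        ring

private def Reach (O : PartialOrientation G) (a b : V) : Prop :=
  Relation.ReflTransGen (fun x y => O.dir x y = true) a b

private lemma reach_iff_rw (O : PartialOrientation G) (a b : V) :
    Reach O a b ↔ ∃ n, RW O n a b := by
  constructor
  · intro h
    induction h using Relation.ReflTransGen.head_induction_on with
    | refl => exact ⟨0, RW.refl _⟩
    | head hstep _ ih => obtain ⟨n, hn⟩ := ih; exact ⟨n + 1, RW.step hstep hn⟩
  · rintro ⟨n, hn⟩
    induction hn with
    | refl => exact Relation.ReflTransGen.refl
    | step hd _ ih => exact Relation.ReflTransGen.head hd ih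

private def cutRev (O : PartialOrientation G) (S : Finset V)
    (hcut : ∀ a b, G.Adj a b → a ∈ S → b ∉ S → O.dir b a = true) : PartialOrientation G where
  dir a b := if a ∈ S ∧ b ∉ S then O.dir b a else if a ∉ S ∧ b ∈ S then false else O.dir a b
  adj_of_dir a b hd := by
    by_cases h1 : a ∈ S ∧ b ∉ S
    · simp only [if_pos h1] at hd
      exact (O.adj_of_dir _ _ hd).symm
    · simp only [if_neg h1] at hd
      by_cases h2 : a ∉ S ∧ b ∈ S
      · simp [h2] at hd
      · simp only [if_neg h2] at hd
        exact O.adj_of_dir _ _ hd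
  not_both a b hd := by
    by_cases h1 : a ∈ S ∧ b ∉ S
    · simp only [if_pos h1] at hd
      have k1 : ¬(b ∈ S ∧ a ∉ S) := fun hh => hh.2 h1.1
      have k2 : b ∉ S ∧ a ∈ S := ⟨h1.2, h1.1⟩
      simp only [if_neg k1, if_pos k2]
    · simp only [if_neg h1] at hd
      by_cases h2 : a ∉ S ∧ b ∈ S
      · simp [h2] at hd
      · simp only [if_neg h2] at hd
        have k1 : ¬(b ∈ S ∧ a ∉ S) := fun hh => h2 ⟨hh.2, hh.1⟩
        have k2 : ¬(b ∉ S ∧ a ∈ S) := fun hh => h1 ⟨hh.2, hh.1⟩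
        simp only [if_neg k1, if_neg k2]
        exact O.not_both a b hd

private lemma cutRev_dir (O : PartialOrientation G) (S : Finset V)
    (hcut : ∀ a b, G.Adj a b → a ∈ S → b ∉ S → O.dir b a = true) (a b : V) :
    (cutRev O S hcut).dir a b =
      if a ∈ S ∧ b ∉ S then O.dir b a else if a ∉ S ∧ b ∈ S then false else O.dir a b := rfl

private lemma cutRev_isFull {O : PartialOrientation G} {S : Finset V}
    {hcut : ∀ a b, G.Adj a b → a ∈ S → b ∉ S → O.dir b a = true}
    (hO : O.IsFull) : (cutRev O S hcut).IsFull := by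
  intro a b hab
  by_cases ha : a ∈ S <;> by_cases hb : b ∈ S
  · rcases hO a b hab with hd | hd
    · left; simp [cutRev_dir, ha, hb, hd]
    · right; simp [cutRev_dir, ha, hb, hd]
  · left; simp [cutRev_dir, ha, hb, hcut a b hab ha hb]
  · right; simp [cutRev_dir, ha, hb, hcut b a hab.symm hb ha]
  · rcases hO a b hab with hd | hd
    · left; simp [cutRev_dir, ha, hb, hd]
    · right; simp [cutRev_dir, ha, hb, hd]

private lemma cutRev_linEquiv (O : PartialOrientation G) (S : Finset V)
    (hcut : ∀ a b, G.Adj a b → a ∈ S → b ∉ S → O.dir b a = true) :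
    LinEquiv G O.div (cutRev O S hcut).div := by
  refine ⟨fun x => if x ∈ S then 1 else 0, fun v => ?_⟩
  have key : ∀ x, (if O.dir x v = true then (1:ℤ) else 0)
      - (if (cutRev O S hcut).dir x v = true then (1:ℤ) else 0)
      = if G.Adj v x then ((if v ∈ S then (1:ℤ) else 0) - (if x ∈ S then (1:ℤ) else 0)) else 0 := by
    intro x
    rw [cutRev_dir]
    by_cases hv : v ∈ S <;> by_cases hx : x ∈ S
    · simp [hv, hx]
    · have hiff : O.dir x v = true ↔ G.Adj v x :=
        ⟨fun hh => (O.adj_of_dir _ _ hh).symm, fun hh => hcut v x hh hv hx⟩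
      simp [hv, hx, hiff]
    · have hiff : O.dir v x = true ↔ G.Adj v x :=
        ⟨fun hh => O.adj_of_dir _ _ hh, fun hh => hcut x v hh.symm hx hv⟩
      by_cases hadj : G.Adj v x
      · have h3 : O.dir x v = false := O.not_both v x (hiff.mpr hadj)
        simp [hv, hx, hadj, h3, hiff]
      · have h3 : O.dir x v = false := by
          rcases hxv : O.dir x v with _ | _
          · rfl
          · exact absurd ((O.adj_of_dir x v hxv).symm) hadj
        simp [hv, hx, hadj, h3, hiff]
    · simp [hv, hx]
  have hdd : O.div v - (cutRev O S hcut).div v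
      = ∑ x, ((if O.dir x v = true then (1:ℤ) else 0)
        - (if (cutRev O S hcut).dir x v = true then (1:ℤ) else 0)) := by
    rw [Finset.sum_sub_distrib]
    unfold PartialOrientation.div
    rw [indeg_cast, indeg_cast]
    ring
  rw [hdd, Finset.sum_congr rfl (fun x _ => key x), Finset.sum_filter]

private lemma exists_cut_edge (hG : G.Connected) {S : Set V} {u v : V}
    (hu : u ∈ S) (hv : v ∉ S) : ∃ a b, G.Adj a b ∧ a ∈ S ∧ b ∉ S := by
  obtain ⟨p⟩ := hG.preconnected u v
  clear hG
  induction p with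
  | nil => exact absurd hu hv
  | @cons x y z hadj q ih =>
    by_cases hm : y ∈ S
    · exact ih hm hv
    · exact ⟨x, y, hadj, hu, hm⟩

private lemma step_lemma (hG : G.Connected) :
    ∀ (k : ℕ) (O : PartialOrientation G), O.IsFull → ∀ u v : V,
      Set.ncard {x | ¬ Reach O u x} ≤ k →
      ∃ O' : PartialOrientation G, O'.IsFull ∧
        LinEquiv G (fun x => O.div x + ind u x - ind v x) O'.div := by
  intro k
  induction k with
  | zero =>
    intro O hO u v hk
    by_cases hreach : Reach O u v
    · obtain ⟨n, hn⟩ := (reach_iff_rw O u v).mp hreach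
      obtain ⟨O', hO', hdiv⟩ := exists_full_of_rw n O u v hO hn
      exact ⟨O', hO', linEquiv_congr (fun x => hdiv x) (fun x => rfl) (linEquiv_refl _)⟩
    · have : 0 < Set.ncard {x | ¬ Reach O u x} :=
        Set.ncard_pos (Set.toFinite _) |>.mpr ⟨v, hreach⟩
      omega
  | succ k ih =>
    intro O hO u v hk
    by_cases hreach : Reach O u v
    · obtain ⟨n, hn⟩ := (reach_iff_rw O u v).mp hreach
      obtain ⟨O', hO', hdiv⟩ := exists_full_of_rw n O u v hO hn
      exact ⟨O', hO', linEquiv_congr (fun x => hdiv x) (fun x => rfl) (linEquiv_refl _)⟩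
    · classical
      set S : Finset V := Finset.univ.filter (fun x => Reach O u x) with hS
      have hmemS : ∀ x, x ∈ S ↔ Reach O u x := by
        intro x; simp [hS]
      have hcut : ∀ a b, G.Adj a b → a ∈ S → b ∉ S → O.dir b a = true := by
        intro a b hab haS hbS
        rcases hO a b hab with hd | hd
        · exact absurd ((hmemS b).mpr (((hmemS a).mp haS).tail hd)) hbS
        · exact hd
      have hO2full : (cutRev O S hcut).IsFull := cutRev_isFull hO
      have hpres : ∀ x, Reach O u x → Reach (cutRev O S hcut) u x := by
        intro x hx
        induction hx with
        | refl => exact Relation.ReflTransGen.refl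
        | @tail b c hub hbc ih' =>
          refine ih'.tail ?_
          have hbS : b ∈ S := (hmemS b).mpr hub
          have hcS : c ∈ S := (hmemS c).mpr (hub.tail hbc)
          rw [cutRev_dir]
          simp [hbS, hcS, hbc]
      obtain ⟨a, b, hab, haS, hbS⟩ :=
        exists_cut_edge (S := {x | Reach O u x}) hG
          (show Reach O u u from Relation.ReflTransGen.refl) hreach
      have haS' : a ∈ S := (hmemS a).mpr haS
      have hbS' : b ∉ S := fun hh => hbS ((hmemS b).mp hh)
      have hdir2 : (cutRev O S hcut).dir a b = true := by
        rw [cutRev_dir, if_pos ⟨haS', hbS'⟩]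
        exact hcut a b hab haS' hbS'
      have hreach2b : Reach (cutRev O S hcut) u b := (hpres a haS).tail hdir2
      have hsub : {x | ¬ Reach (cutRev O S hcut) u x} ⊂ {x | ¬ Reach O u x} := by
        rw [Set.ssubset_def]
        constructor
        · intro x hx hRx
          exact hx (hpres x hRx)
        · intro hsup
          exact (hsup hbS) hreach2b
      have hlt : Set.ncard {x | ¬ Reach (cutRev O S hcut) u x} ≤ k := by
        have := Set.ncard_lt_ncard hsub (Set.toFinite _)
        omega
      obtain ⟨O', hO', hle⟩ := ih (cutRev O S hcut) hO2full u v hlt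
      have h1 : LinEquiv G (fun x => O.div x + (ind u x - ind v x))
          (fun x => (cutRev O S hcut).div x + (ind u x - ind v x)) :=
        linEquiv_add_right _ (cutRev_linEquiv O S hcut)
      exact ⟨O', hO', linEquiv_trans
        (linEquiv_congr (fun x => by ring) (fun x => by ring) h1) hle⟩

private lemma sum_div_eq (O : PartialOrientation G) (hO : O.IsFull) :
    ∑ v, O.div v = (G.edgeFinset.card : ℤ) - (Fintype.card V : ℤ) := by
  have key : ∀ u v : V, (if O.dir u v = true then (1:ℤ) else 0)
      + (if O.dir v u = true then (1:ℤ) else 0) = if G.Adj u v then 1 else 0 := by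
    intro u v
    by_cases h1 : O.dir u v = true
    · have h2 : O.dir v u = false := O.not_both u v h1
      simp [h1, h2, O.adj_of_dir u v h1]
    · by_cases h2 : O.dir v u = true
      · simp [h1, h2, (O.adj_of_dir v u h2).symm]
      · by_cases h3 : G.Adj u v
        · rcases hO u v h3 with h | h
          · exact absurd h h1
          · exact absurd h h2
        · simp [h1, h2, h3]
  have hdeg : ∀ v : V, ((G.degree v : ℤ)) = ∑ u, if G.Adj u v then (1:ℤ) else 0 := by
    intro v
    rw [← SimpleGraph.card_neighborFinset_eq_degree, SimpleGraph.neighborFinset_eq_filter,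
      card_filter_cast]
    exact Finset.sum_congr rfl fun u _ => if_congr (G.adj_comm v u) rfl rfl
  have h2 : (2:ℤ) * ∑ v, ((O.indeg v : ℤ)) = 2 * (G.edgeFinset.card : ℤ) := by
    have e1 : ∑ v, ∑ u, (if O.dir u v = true then (1:ℤ) else 0)
        = ∑ v, ∑ u, (if O.dir v u = true then (1:ℤ) else 0) := Finset.sum_comm
    calc (2:ℤ) * ∑ v, ((O.indeg v : ℤ))
        = ∑ v, ∑ u, (if O.dir u v = true then (1:ℤ) else 0)
          + ∑ v, ∑ u, (if O.dir v u = true then (1:ℤ) else 0) := by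
          rw [← e1]
          simp only [indeg_cast]
          ring
      _ = ∑ v, ∑ u, ((if O.dir u v = true then (1:ℤ) else 0)
          + (if O.dir v u = true then (1:ℤ) else 0)) := by
          rw [← Finset.sum_add_distrib]
          exact Finset.sum_congr rfl fun v _ => by rw [← Finset.sum_add_distrib]
      _ = ∑ v, ∑ u, (if G.Adj u v then (1:ℤ) else 0) :=
          Finset.sum_congr rfl fun v _ => Finset.sum_congr rfl fun u _ => key u v
      _ = ∑ v, ((G.degree v : ℤ)) := Finset.sum_congr rfl fun v _ => (hdeg v).symm
      _ = ((∑ v, G.degree v : ℕ) : ℤ) := by push_cast; ring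
      _ = 2 * (G.edgeFinset.card : ℤ) := by
          rw [SimpleGraph.sum_degrees_eq_twice_card_edges]
          push_cast; ring
  have h3 : ∑ v, ((O.indeg v : ℤ)) = (G.edgeFinset.card : ℤ) := by linarith
  unfold PartialOrientation.div
  rw [Finset.sum_sub_distrib, h3]
  simp [Finset.card_univ]

private noncomputable def initO (G : SimpleGraph V) [DecidableRel G.Adj] :
    PartialOrientation G where
  dir a b := decide (G.Adj a b ∧ (Fintype.equivFin V a : ℕ) < (Fintype.equivFin V b : ℕ))
  adj_of_dir a b h := (of_decide_eq_true h).1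
  not_both a b h := by
    have h2 := (of_decide_eq_true h).2
    apply decide_eq_false
    rintro ⟨-, hlt⟩
    omega
  
private lemma initO_isFull : (initO G).IsFull := by
  intro a b hab
  have hne : (Fintype.equivFin V a : ℕ) ≠ (Fintype.equivFin V b : ℕ) := by
    intro hh
    exact hab.ne (Fintype.equivFin V |>.injective (Fin.ext hh))
  rcases Nat.lt_or_ge (Fintype.equivFin V a : ℕ) (Fintype.equivFin V b : ℕ) with hlt | hge
  · left; exact decide_eq_true ⟨hab, hlt⟩
  · right; exact decide_eq_true ⟨hab.symm, by omega⟩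

private lemma key_lemma (hG : G.Connected) :
    ∀ (n : ℕ) (O : PartialOrientation G), O.IsFull → ∀ f : V → ℤ,
      (∑ v, f v) = 0 → (∑ v, |f v|) ≤ (n : ℤ) →
      ∃ O' : PartialOrientation G, O'.IsFull ∧
        LinEquiv G (fun v => O.div v + f v) O'.div := by
  intro n
  induction n with
  | zero =>
    intro O hO f hsum habs
    have hz : ∀ v, f v = 0 := by
      have h0 : ∑ v, |f v| = 0 :=
        le_antisymm habs (Finset.sum_nonneg fun v _ => abs_nonneg _)
      intro v
      exact abs_eq_zero.mp
        ((Finset.sum_eq_zero_iff_of_nonneg (fun v _ => abs_nonneg (f v))).mp h0 v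
          (Finset.mem_univ v))
    exact ⟨O, hO, linEquiv_congr (fun x => by rw [hz x, add_zero]) (fun x => rfl)
      (linEquiv_refl O.div)⟩
  | succ n ih =>
    intro O hO f hsum habs
    by_cases hz : ∀ v, f v = 0
    · exact ⟨O, hO, linEquiv_congr (fun x => by rw [hz x, add_zero]) (fun x => rfl)
        (linEquiv_refl O.div)⟩
    · push_neg at hz
      obtain ⟨v0, hv0⟩ := hz
      have hex_pos : ∃ u, 0 < f u := by
        by_contra hc
        push_neg at hc
        have hlt : ∑ v, f v < ∑ v : V, (0:ℤ) :=
          Finset.sum_lt_sum (fun i _ => hc i)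
            ⟨v0, Finset.mem_univ _, lt_of_le_of_ne (hc v0) hv0⟩
        simp only [Finset.sum_const_zero] at hlt
        omega
      have hex_neg : ∃ w, f w < 0 := by
        by_contra hc
        push_neg at hc
        have hlt : ∑ v : V, (0:ℤ) < ∑ v, f v :=
          Finset.sum_lt_sum (fun i _ => hc i)
            ⟨v0, Finset.mem_univ _, lt_of_le_of_ne (hc v0) (Ne.symm hv0)⟩
        simp only [Finset.sum_const_zero] at hlt
        omega
      obtain ⟨u, hu⟩ := hex_pos
      obtain ⟨w, hw⟩ := hex_neg
      have huw : u ≠ w := fun hh => by rw [hh] at hu; omega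
      obtain ⟨O1, hO1, hle1⟩ :=
        step_lemma hG (Set.ncard {x | ¬ Reach O u x}) O hO u w le_rfl
      set f' : V → ℤ := fun x => f x - ind u x + ind w x with hf'
      have hsum' : ∑ v, f' v = 0 := by
        simp only [hf', ind]
        rw [Finset.sum_add_distrib, Finset.sum_sub_distrib, Finset.sum_ite_eq',
          Finset.sum_ite_eq']
        simp [hsum]
      have hpt : ∀ x, |f' x| = |f x| - ind u x - ind w x := by
        intro x
        by_cases hxu : x = u
        · have hxw : x ≠ w := by rw [hxu]; exact huw
          have e1 : f' x = f x - 1 := by simp [hf', ind, hxu, hxw, huw]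
          have e2 : ind u x = 1 := by simp [ind, hxu]
          have e3 : ind w x = 0 := by simp [ind, hxw]
          have hfx : 0 < f x := hxu ▸ hu
          rw [e1, e2, e3, abs_of_nonneg (show (0:ℤ) ≤ f x - 1 by omega), abs_of_pos hfx]
          ring
        · by_cases hxw : x = w
          · have e1 : f' x = f x + 1 := by simp [hf', ind, hxu, hxw, Ne.symm huw]
            have e2 : ind u x = 0 := by simp [ind, hxu]
            have e3 : ind w x = 1 := by simp [ind, hxw]
            have hfx : f x < 0 := hxw ▸ hw
            rw [e1, e2, e3, abs_of_nonpos (show f x + 1 ≤ 0 by omega), abs_of_neg hfx]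
            ring
          · simp [hf', ind, hxu, hxw]
      have habs' : ∑ v, |f' v| ≤ (n : ℤ) := by
        have hcalc : ∑ x, |f' x| = (∑ x, |f x|) - 1 - 1 := by
          rw [Finset.sum_congr rfl (fun x _ => hpt x), Finset.sum_sub_distrib,
            Finset.sum_sub_distrib]
          unfold ind
          rw [Finset.sum_ite_eq', Finset.sum_ite_eq']
          simp
        rw [hcalc]
        push_cast at habs ⊢
        linarith
      obtain ⟨O', hO', hle2⟩ := ih O1 hO1 f' hsum' habs'
      have h3 : LinEquiv G (fun x => (O.div x + ind u x - ind w x) + f' x)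
          (fun x => O1.div x + f' x) := linEquiv_add_right f' hle1
      refine ⟨O', hO', linEquiv_trans (linEquiv_congr (fun x => ?_) (fun x => rfl) h3) hle2⟩
      simp only [hf', ind]
      ring

end Stmt7Proof
/-- Every divisor of degree `g - 1` is linearly equivalent to the
divisor of a full orientation. -/
theorem stmt7 {V : Type*} [Fintype V] [DecidableEq V] (G : SimpleGraph V)
    [DecidableRel G.Adj] (hG : G.Connected)
    (D : V → ℤ) (hD : degDiv D = graphGenus G - 1) :
    ∃ O : PartialOrientation G, O.IsFull ∧ LinEquiv G D O.div := by
  classical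
  set O0 := initO G with hO0
  have hfull0 : O0.IsFull := initO_isFull
  set f : V → ℤ := fun v => D v - O0.div v with hf
  have hsum : ∑ v, f v = 0 := by
    have h1 : ∑ v, O0.div v = (G.edgeFinset.card : ℤ) - (Fintype.card V : ℤ) :=
      sum_div_eq O0 hfull0
    have h2 : ∑ v, D v = (G.edgeFinset.card : ℤ) - (Fintype.card V : ℤ) := by
      unfold degDiv graphGenus at hD
      linarith
    simp only [hf]
    rw [Finset.sum_sub_distrib, h1, h2]
    ring
  have habs : ∑ v, |f v| ≤ ((∑ v, |f v|).toNat : ℤ) := Int.self_le_toNat _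
  obtain ⟨O', hO', hle⟩ := key_lemma hG (∑ v, |f v|).toNat O0 hfull0 f hsum habs
  refine ⟨O', hO', linEquiv_congr (fun v => ?_) (fun v => rfl) hle⟩
  simp only [hf]
  ring
end

section
/- Let D be a divisor on a finite connected simple graph G with deg(D) ≤ g − 1. Then r(D) ≥ 0 if and only if D is linearly equivalent to the divisor D_O of some sourceless partial orientation O of G. -/
namespace Stmt10Aux

open Finset
set_option linter.unusedSectionVars false

variable {V : Type*} [Fintype V] [DecidableEq V] (G : SimpleGraph V) [DecidableRel G.Adj]

open scoped Classical in
/-- ordered count of adjacent pairs in `S × T` -/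
noncomputable def cC (S T : Finset V) : ℕ := ((S ×ˢ T).filter (fun p => G.Adj p.1 p.2)).card

open scoped Classical in
/-- number of edges meeting `A` -/
noncomputable def nE (A : Finset V) : ℕ :=
  (G.edgeFinset.filter (fun e => ∃ x ∈ e, x ∈ A)).card

open scoped Classical in
/-- number of edges inside `A` -/
noncomputable def iE (A : Finset V) : ℕ :=
  (G.edgeFinset.filter (fun e => ∀ x ∈ e, x ∈ A)).card

variable {G}

lemma cC_symm (S T : Finset V) : cC G S T = cC G T S := by
  classical
  unfold cC
  apply Finset.card_bij (fun p _ => (p.2, p.1))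
  · intro p hp
    simp only [Finset.mem_filter, Finset.mem_product] at hp ⊢
    exact ⟨⟨hp.1.2, hp.1.1⟩, hp.2.symm⟩
  · intro p hp q hq h
    simpa [Prod.ext_iff, and_comm] using (Prod.ext_iff.mp h)
  · intro p hp
    simp only [Finset.mem_filter, Finset.mem_product] at hp
    exact ⟨(p.2, p.1), by simp [Finset.mem_filter, hp.1.1, hp.1.2, hp.2.symm], rfl⟩

lemma cC_union_left {S₁ S₂ : Finset V} (h : Disjoint S₁ S₂) (T : Finset V) :
    cC G (S₁ ∪ S₂) T = cC G S₁ T + cC G S₂ T := by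
  classical
  unfold cC
  rw [← Finset.card_union_of_disjoint, ← Finset.filter_union, ← Finset.union_product]
  exact Finset.disjoint_filter_filter (Finset.disjoint_product.mpr (Or.inl h))

lemma cC_union_right (S : Finset V) {T₁ T₂ : Finset V} (h : Disjoint T₁ T₂) :
    cC G S (T₁ ∪ T₂) = cC G S T₁ + cC G S T₂ := by
  rw [cC_symm, cC_union_left h, cC_symm T₁ S, cC_symm T₂ S]

lemma cC_empty_left (T : Finset V) : cC G ∅ T = 0 := by
  simp [cC]

end Stmt10Aux
namespace Stmt10Aux
open Finset
set_option linter.unusedSectionVars false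
variable {V : Type*} [Fintype V] [DecidableEq V] {G : SimpleGraph V} [DecidableRel G.Adj]

lemma sym2_exists_mem (e : Sym2 V) : ∃ x, x ∈ e := by
  induction e using Sym2.inductionOn with
  | hf a b => exact ⟨a, Sym2.mem_mk_left a b⟩

lemma cC_eq_edges {S T : Finset V} (hST : Disjoint S T) :
    cC G S T =
      (G.edgeFinset.filter (fun e => (∃ x ∈ e, x ∈ S) ∧ (∃ y ∈ e, y ∈ T))).card := by
  classical
  unfold cC
  refine Finset.card_bij (fun (p : V × V) _ => s(p.1, p.2)) ?_ ?_ ?_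
  · intro p hp
    simp only [Finset.mem_filter, Finset.mem_product] at hp
    simp only [Finset.mem_filter, SimpleGraph.mem_edgeFinset, SimpleGraph.mem_edgeSet]
    exact ⟨hp.2, ⟨p.1, Sym2.mem_mk_left _ _, hp.1.1⟩, ⟨p.2, Sym2.mem_mk_right _ _, hp.1.2⟩⟩
  · intro p hp q hq h
    simp only [Finset.mem_filter, Finset.mem_product] at hp hq
    rcases Sym2.eq_iff.mp h with ⟨h1, h2⟩ | ⟨h1, h2⟩
    · exact Prod.ext h1 h2
    · exact absurd hq.1.1 (fun hc => Finset.disjoint_left.mp hST hc (h2 ▸ hp.1.2))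
  · intro e he
    simp only [Finset.mem_filter, SimpleGraph.mem_edgeFinset, SimpleGraph.mem_edgeSet] at he
    obtain ⟨hadj, ⟨x, hxe, hxS⟩, ⟨y, hye, hyT⟩⟩ := he
    have hx := Sym2.other_spec hxe
    have hy' : y = x ∨ y = Sym2.Mem.other hxe := by
      rw [← hx] at hye; exact Sym2.mem_iff.mp hye
    have hyo : y = Sym2.Mem.other hxe := by
      rcases hy' with rfl | h
      · exact absurd hyT (Finset.disjoint_left.mp hST hxS)
      · exact h
    refine ⟨(x, y), ?_, by rw [← hx, hyo]⟩
    simp only [Finset.mem_filter, Finset.mem_product]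
    have : G.Adj x y := by
      rw [← SimpleGraph.mem_edgeSet, hyo, hx]; exact hadj
    exact ⟨⟨hxS, hyT⟩, this⟩

lemma nE_split {U T : Finset V} (hUT : Disjoint U T) :
    nE G (U ∪ T) = nE G T + (iE G U + cC G U (univ \ (U ∪ T))) := by
  classical
  unfold nE
  rw [← Finset.card_filter_add_card_filter_not
    (s := G.edgeFinset.filter (fun e => ∃ x ∈ e, x ∈ U ∪ T)) (p := fun e => ∃ x ∈ e, x ∈ T)]
  congr 1
  · congr 1
    ext e
    simp only [Finset.mem_filter, Finset.mem_union]
    constructor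
    · rintro ⟨⟨he, -⟩, hQ⟩; exact ⟨he, hQ⟩
    · rintro ⟨he, x, hxe, hxT⟩; exact ⟨⟨he, x, hxe, Or.inr hxT⟩, x, hxe, hxT⟩
  · rw [← Finset.card_filter_add_card_filter_not
      (s := (G.edgeFinset.filter (fun e => ∃ x ∈ e, x ∈ U ∪ T)).filter
        (fun e => ¬ ∃ x ∈ e, x ∈ T)) (p := fun e => ∀ x ∈ e, x ∈ U)]
    congr 1
    · -- inside U part equals iE U
      unfold iE
      congr 1
      ext e
      simp only [Finset.mem_filter, Finset.mem_union]
      constructor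
      · rintro ⟨⟨⟨he, -⟩, -⟩, hR⟩; exact ⟨he, hR⟩
      · rintro ⟨he, hR⟩
        obtain ⟨x, hxe⟩ := sym2_exists_mem e
        refine ⟨⟨⟨he, x, hxe, Or.inl (hR x hxe)⟩, ?_⟩, hR⟩
        rintro ⟨y, hye, hyT⟩
        exact Finset.disjoint_left.mp hUT (hR y hye) hyT
    · -- cut part equals cC
      rw [cC_eq_edges (Finset.disjoint_sdiff.mono_left (Finset.subset_union_left))]
      congr 1
      ext e
      induction e using Sym2.inductionOn with
      | hf a b =>
        simp only [Finset.mem_filter, Sym2.mem_iff, Finset.mem_union, Finset.mem_sdiff,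
          Finset.mem_univ, true_and]
        constructor
        · rintro ⟨⟨⟨he, hP⟩, hQ⟩, hR⟩
          push_neg at hQ hR
          have haT : a ∉ T := hQ a (Or.inl rfl)
          have hbT : b ∉ T := hQ b (Or.inr rfl)
          refine ⟨he, ?_⟩
          by_cases haU : a ∈ U
          · obtain ⟨c, hc, hcU⟩ := hR
            rcases hc with rfl | rfl
            · exact absurd haU hcU
            · exact ⟨⟨a, Or.inl rfl, haU⟩, c, Or.inr rfl, fun h => h.elim hcU hbT⟩
          · obtain ⟨x, hx, hxUT⟩ := hP
            have hbU : b ∈ U := by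
              rcases hx with rfl | rfl
              · rcases hxUT with h | h
                · exact absurd h haU
                · exact absurd h haT
              · rcases hxUT with h | h
                · exact h
                · exact absurd h hbT
            exact ⟨⟨b, Or.inr rfl, hbU⟩, a, Or.inl rfl, fun h => h.elim haU haT⟩
        · rintro ⟨he, ⟨x, hx, hxU⟩, ⟨y, hy, hyC⟩⟩
          have hxT : x ∉ T := Finset.disjoint_left.mp hUT hxU
          have hxy : x ≠ y := fun h => hyC (Or.inl (h ▸ hxU))
          have hall : ∀ z, z = a ∨ z = b → z = x ∨ z = y := by
            intro z hz
            rcases hx with rfl | rfl <;> rcases hy with rfl | rfl <;>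
              first | exact absurd rfl hxy | tauto
          refine ⟨⟨⟨he, x, hx, Or.inl hxU⟩, ?_⟩, ?_⟩
          · rintro ⟨z, hz, hzT⟩
            rcases hall z hz with rfl | rfl
            · exact hxT hzT
            · exact hyC (Or.inr hzT)
          · rintro hU
            have := hU y hy
            exact hyC (Or.inl this)

end Stmt10Aux
namespace Stmt10Aux
open Finset
set_option linter.unusedSectionVars false
variable {V : Type*} [Fintype V] [DecidableEq V] (G : SimpleGraph V) [DecidableRel G.Adj]

/-- excess of a divisor on a set -/
noncomputable def vEx (E : V → ℤ) (A : Finset V) : ℤ := (∑ v ∈ A, (E v + 1)) - nE G A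

/-- violating set -/
noncomputable def Viol (E : V → ℤ) (A : Finset V) : Prop := 0 < vEx G E A

/-- result of firing the set `A` -/
noncomputable def fire (E : V → ℤ) (A : Finset V) : V → ℤ := fun v =>
  E v - ∑ u ∈ Finset.univ.filter (fun u => G.Adj v u),
    ((if v ∈ A then (1:ℤ) else 0) - (if u ∈ A then 1 else 0))

variable {G}

lemma nE_univ : nE G (univ : Finset V) = G.edgeFinset.card := by
  unfold nE
  congr 1
  rw [Finset.filter_true_of_mem]
  intro e _
  obtain ⟨x, hx⟩ := sym2_exists_mem e
  exact ⟨x, hx, Finset.mem_univ x⟩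

lemma nE_empty : nE G (∅ : Finset V) = 0 := by
  unfold nE
  rw [Finset.card_eq_zero, Finset.filter_eq_empty_iff]
  rintro e - ⟨x, -, hx⟩
  exact absurd hx (Finset.notMem_empty x)

lemma nE_submod (A B : Finset V) :
    nE G (A ∪ B) + nE G (A ∩ B) ≤ nE G A + nE G B := by
  classical
  unfold nE
  rw [Finset.card_filter, Finset.card_filter, Finset.card_filter, Finset.card_filter,
    ← Finset.sum_add_distrib, ← Finset.sum_add_distrib]
  apply Finset.sum_le_sum
  intro e _
  by_cases hI : ∃ x ∈ e, x ∈ A ∩ B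
  · obtain ⟨x, hxe, hx⟩ := hI
    rw [Finset.mem_inter] at hx
    have hA : ∃ x ∈ e, x ∈ A := ⟨x, hxe, hx.1⟩
    have hB : ∃ x ∈ e, x ∈ B := ⟨x, hxe, hx.2⟩
    simp only [hA, hB, if_pos, if_true]
    have : (if ∃ x ∈ e, x ∈ A ∪ B then (1:ℕ) else 0) ≤ 1 := by split <;> omega
    have h2 : (if ∃ x ∈ e, x ∈ A ∩ B then (1:ℕ) else 0) ≤ 1 := by split <;> omega
    omega
  · simp only [hI, if_false]
    by_cases hU : ∃ x ∈ e, x ∈ A ∪ B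
    · obtain ⟨x, hxe, hx⟩ := hU
      rw [Finset.mem_union] at hx
      rcases hx with hx | hx
      · have hA : ∃ x ∈ e, x ∈ A := ⟨x, hxe, hx⟩
        simp only [hA, if_true]
        have : (if ∃ x ∈ e, x ∈ A ∪ B then (1:ℕ) else 0) ≤ 1 := by split <;> omega
        omega
      · have hB : ∃ x ∈ e, x ∈ B := ⟨x, hxe, hx⟩
        simp only [hB, if_true]
        have : (if ∃ x ∈ e, x ∈ A ∪ B then (1:ℕ) else 0) ≤ 1 := by split <;> omega
        omega
    · have hA : ¬∃ x ∈ e, x ∈ A := fun ⟨x, hx, h⟩ => hU ⟨x, hx, Finset.mem_union_left _ h⟩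
      have hB : ¬∃ x ∈ e, x ∈ B := fun ⟨x, hx, h⟩ => hU ⟨x, hx, Finset.mem_union_right _ h⟩
      simp only [hU, hA, hB, if_false]
      omega

lemma cC_sum (S T : Finset V) :
    cC G S T = ∑ v ∈ S, (T.filter (fun u => G.Adj v u)).card := by
  classical
  unfold cC
  rw [Finset.card_eq_sum_card_fiberwise (f := Prod.fst) (t := S)
    (fun p hp => (Finset.mem_product.mp (Finset.mem_filter.mp hp).1).1)]
  apply Finset.sum_congr rfl
  intro v hv
  apply Finset.card_bij (fun p _ => p.2)
  · intro p hp
    simp only [Finset.mem_filter, Finset.mem_product] at hp ⊢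
    rcases hp with ⟨⟨⟨-, h2⟩, h3⟩, h4⟩
    exact ⟨h2, h4 ▸ h3⟩
  · intro p hp q hq h
    simp only [Finset.mem_filter, Finset.mem_product] at hp hq
    exact Prod.ext (hp.2.trans hq.2.symm) h
  · intro u hu
    simp only [Finset.mem_filter] at hu
    exact ⟨(v, u), by simp [Finset.mem_filter, Finset.mem_product, hv, hu.1, hu.2], rfl⟩

lemma cC_singleton (v : V) (T : Finset V) :
    cC G {v} T = (T.filter (fun u => G.Adj v u)).card := by
  rw [cC_sum, Finset.sum_singleton]

lemma lap_in {A : Finset V} {v : V} (hv : v ∈ A) :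
    (∑ u ∈ Finset.univ.filter (fun u => G.Adj v u),
      ((if v ∈ A then (1:ℤ) else 0) - (if u ∈ A then 1 else 0)))
      = (cC G {v} (univ \ A) : ℤ) := by
  classical
  rw [cC_singleton]
  rw [Finset.sum_congr rfl (g := fun u => if u ∈ univ \ A then (1:ℤ) else 0)
    (fun u _ => by by_cases h : u ∈ A <;> simp [h, hv])]
  rw [Finset.sum_boole]
  congr 2
  ext u
  simp [Finset.mem_filter, and_comm]

lemma lap_out {A : Finset V} {v : V} (hv : v ∉ A) :
    (∑ u ∈ Finset.univ.filter (fun u => G.Adj v u),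
      ((if v ∈ A then (1:ℤ) else 0) - (if u ∈ A then 1 else 0)))
      = -(cC G {v} A : ℤ) := by
  classical
  rw [cC_singleton]
  rw [Finset.sum_congr rfl (g := fun u => -(if u ∈ A then (1:ℤ) else 0))
    (fun u _ => by by_cases h : u ∈ A <;> simp [h, hv])]
  rw [Finset.sum_neg_distrib]
  congr 1
  rw [Finset.sum_boole]
  congr 2
  ext u
  simp [Finset.mem_filter, and_comm]

end Stmt10Aux
namespace Stmt10Aux
open Finset
set_option linter.unusedSectionVars false
variable {V : Type*} [Fintype V] [DecidableEq V] {G : SimpleGraph V} [DecidableRel G.Adj]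

lemma cC_sum_cast (S T : Finset V) :
    (∑ v ∈ S, (cC G {v} T : ℤ)) = (cC G S T : ℤ) := by
  rw [cC_sum]
  push_cast
  exact Finset.sum_congr rfl (fun v _ => by rw [cC_singleton])

lemma fire_in_eq {A : Finset V} {v : V} (hv : v ∈ A) (E : V → ℤ) :
    fire G E A v = E v - cC G {v} (univ \ A) := by
  unfold fire; rw [lap_in hv]

lemma fire_out_eq {A : Finset V} {v : V} (hv : v ∉ A) (E : V → ℤ) :
    fire G E A v = E v + cC G {v} A := by
  unfold fire; rw [lap_out hv]; ring

lemma sum_fire (E : V → ℤ) (A B : Finset V) :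
    ∑ v ∈ B, fire G E A v
      = (∑ v ∈ B, E v) - (cC G (A ∩ B) (univ \ (A ∪ B)) : ℤ)
        + (cC G (A \ B) (B \ A) : ℤ) := by
  classical
  have hsplit : ∑ v ∈ B, fire G E A v
      = (∑ v ∈ B ∩ A, fire G E A v) + ∑ v ∈ B \ A, fire G E A v := by
    rw [Finset.sum_inter_add_sum_sdiff]
  have h1 : ∑ v ∈ B ∩ A, fire G E A v
      = (∑ v ∈ B ∩ A, E v) - (cC G (B ∩ A) (univ \ A) : ℤ) := by
    rw [← cC_sum_cast, ← Finset.sum_sub_distrib]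
    exact Finset.sum_congr rfl
      (fun v hv => fire_in_eq (Finset.mem_inter.mp hv).2 E)
  have h2 : ∑ v ∈ B \ A, fire G E A v
      = (∑ v ∈ B \ A, E v) + (cC G (B \ A) A : ℤ) := by
    rw [← cC_sum_cast, ← Finset.sum_add_distrib]
    exact Finset.sum_congr rfl
      (fun v hv => fire_out_eq (Finset.mem_sdiff.mp hv).2 E)
  have hUA : univ \ A = (univ \ (A ∪ B)) ∪ (B \ A) := by
    ext u; simp only [Finset.mem_sdiff, Finset.mem_union, Finset.mem_univ, true_and]
    tauto
  have hdisj : Disjoint (univ \ (A ∪ B)) (B \ A) := by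
    rw [Finset.disjoint_left]
    intro u hu
    simp only [Finset.mem_sdiff, Finset.mem_union, Finset.mem_univ, true_and] at hu ⊢
    tauto
  have hA : A = (A ∩ B) ∪ (A \ B) := by
    rw [Finset.union_comm, Finset.sdiff_union_inter]
  have hdisj2 : Disjoint (A ∩ B) (A \ B) := by
    rw [Finset.disjoint_left]
    intro u hu
    simp only [Finset.mem_inter, Finset.mem_sdiff] at hu ⊢
    tauto
  have e1 : cC G (B ∩ A) (univ \ A)
      = cC G (B ∩ A) (univ \ (A ∪ B)) + cC G (B ∩ A) (B \ A) := by
    rw [hUA, cC_union_right _ hdisj]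
  have e2 : cC G (B \ A) A = cC G (B \ A) (A ∩ B) + cC G (B \ A) (A \ B) := by
    calc cC G (B \ A) A = cC G (B \ A) ((A ∩ B) ∪ (A \ B)) := by rw [← hA]
    _ = _ := cC_union_right _ hdisj2
  have e3 : cC G (B ∩ A) (B \ A) = cC G (B \ A) (A ∩ B) := by
    rw [cC_symm, Finset.inter_comm]
  have e4 : cC G (B \ A) (A \ B) = cC G (A \ B) (B \ A) := cC_symm _ _
  have e5 : B ∩ A = A ∩ B := Finset.inter_comm _ _
  have hsum : (∑ v ∈ B ∩ A, E v) + ∑ v ∈ B \ A, E v = ∑ v ∈ B, E v := by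
    rw [Finset.sum_inter_add_sum_sdiff]
  rw [hsplit, h1, h2, e1, e2, e3, e4, ← e5]
  push_cast
  linarith

lemma sum_exceeds_of_minviol {E : V → ℤ} {A : Finset V} (hA : Viol G E A)
    (hmin : ∀ B, Viol G E B → A.card ≤ B.card)
    {S : Finset V} (hS : S ⊆ A) (hne : S.Nonempty) :
    1 + (iE G S : ℤ) + (cC G S (univ \ A) : ℤ) ≤ ∑ v ∈ S, (E v + 1) := by
  classical
  have hA1 : 1 ≤ vEx G E A := hA
  have hAS : ¬ Viol G E (A \ S) := by
    intro hv
    have hcard := hmin _ hv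
    have h1 : (A \ S).card = A.card - S.card := Finset.card_sdiff_of_subset hS
    have h2 : 1 ≤ S.card := Finset.card_pos.mpr hne
    have h3 : S.card ≤ A.card := Finset.card_le_card hS
    omega
  have hAS' : vEx G E (A \ S) ≤ 0 := not_lt.mp hAS
  have hdisj : Disjoint S (A \ S) := Finset.disjoint_sdiff
  have hunion : S ∪ (A \ S) = A := Finset.union_sdiff_of_subset hS
  have hnE : nE G A = nE G (A \ S) + (iE G S + cC G S (univ \ A)) := by
    conv_lhs => rw [← hunion]
    rw [nE_split hdisj, hunion]
  have hsum : ∑ v ∈ A, (E v + 1) = (∑ v ∈ S, (E v + 1)) + ∑ v ∈ A \ S, (E v + 1) := by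
    conv_lhs => rw [← hunion]
    rw [Finset.sum_union hdisj]
  unfold vEx at hA1 hAS'
  rw [hnE, hsum] at hA1
  push_cast at hA1 hAS' ⊢
  linarith

lemma fire_effective {E : V → ℤ} (hE : ∀ v, 0 ≤ E v) {A : Finset V} (hA : Viol G E A)
    (hmin : ∀ B, Viol G E B → A.card ≤ B.card) :
    ∀ v, 0 ≤ fire G E A v := by
  intro v
  by_cases hv : v ∈ A
  · rw [fire_in_eq hv]
    have := sum_exceeds_of_minviol hA hmin (Finset.singleton_subset_iff.mpr hv)
      (Finset.singleton_nonempty v)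
    rw [Finset.sum_singleton] at this
    have h0 : (0:ℤ) ≤ iE G {v} := Int.ofNat_nonneg _
    linarith
  · rw [fire_out_eq hv]
    have h0 : (0:ℤ) ≤ cC G {v} A := Int.ofNat_nonneg _
    linarith [hE v]

lemma vEx_supermod (E : V → ℤ) (A B : Finset V) :
    vEx G E A + vEx G E B ≤ vEx G E (A ∪ B) + vEx G E (A ∩ B) := by
  unfold vEx
  have h1 := nE_submod (G := G) A B
  have h2 : (∑ v ∈ A ∪ B, (E v + 1)) + ∑ v ∈ A ∩ B, (E v + 1)
      = (∑ v ∈ A, (E v + 1)) + ∑ v ∈ B, (E v + 1) := Finset.sum_union_inter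
  push_cast
  push_cast at h2
  linarith [h2, (by exact_mod_cast h1 :
    (nE G (A ∪ B) : ℤ) + nE G (A ∩ B) ≤ nE G A + nE G B)]

lemma vEx_empty (E : V → ℤ) : vEx G E ∅ = 0 := by
  simp [vEx, nE_empty]

lemma viol_nonempty {E : V → ℤ} {A : Finset V} (hA : Viol G E A) : A.Nonempty := by
  rcases Finset.eq_empty_or_nonempty A with rfl | h
  · exact absurd hA (by simp [Viol, vEx_empty])
  · exact h

lemma vEx_fire_subset {E : V → ℤ} {A B : Finset V} (hAB : A ⊆ B) :
    vEx G (fire G E A) B ≤ vEx G E B := by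
  unfold vEx
  have h1 : A \ B = ∅ := Finset.sdiff_eq_empty_iff_subset.mpr hAB
  have h0 : (0:ℤ) ≤ cC G (A ∩ B) (univ \ (A ∪ B)) := Int.ofNat_nonneg _
  have hB1 : (∑ v ∈ B, (fire G E A v + 1)) = (∑ v ∈ B, fire G E A v) + B.card := by
    rw [Finset.sum_add_distrib]; simp
  have hB2 : (∑ v ∈ B, (E v + 1)) = (∑ v ∈ B, E v) + B.card := by
    rw [Finset.sum_add_distrib]; simp
  rw [hB1, hB2, sum_fire, h1, cC_empty_left]
  push_cast
  linarith

lemma vEx_fire_nsubset {E : V → ℤ} {A B : Finset V} (hA : Viol G E A)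
    (hmin : ∀ B', Viol G E B' → A.card ≤ B'.card) (hAB : ¬ A ⊆ B) :
    vEx G (fire G E A) B + 1 ≤ vEx G E (A ∪ B) := by
  classical
  have hSne : (A \ B).Nonempty := by
    rw [Finset.sdiff_nonempty]; exact hAB
  have hkey := sum_exceeds_of_minviol hA hmin (Finset.sdiff_subset) hSne
  have hdisj : Disjoint (A \ B) B := Finset.sdiff_disjoint
  have hunion : (A \ B) ∪ B = A ∪ B := Finset.sdiff_union_self_eq_union
  have hnE : nE G (A ∪ B) = nE G B + (iE G (A \ B) + cC G (A \ B) (univ \ (A ∪ B))) := by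
    rw [← hunion, nE_split hdisj, hunion]
  have hsum : ∑ v ∈ A ∪ B, (E v + 1)
      = (∑ v ∈ A \ B, (E v + 1)) + ∑ v ∈ B, (E v + 1) := by
    rw [← hunion, Finset.sum_union hdisj]
  have hUA : univ \ A = (univ \ (A ∪ B)) ∪ (B \ A) := by
    ext u; simp only [Finset.mem_sdiff, Finset.mem_union, Finset.mem_univ, true_and]
    tauto
  have hdisj2 : Disjoint (univ \ (A ∪ B)) (B \ A) := by
    rw [Finset.disjoint_left]
    intro u hu
    simp only [Finset.mem_sdiff, Finset.mem_union, Finset.mem_univ, true_and] at hu ⊢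
    tauto
  have hcut : cC G (A \ B) (univ \ A)
      = cC G (A \ B) (univ \ (A ∪ B)) + cC G (A \ B) (B \ A) := by
    rw [hUA, cC_union_right _ hdisj2]
  have hB1 : (∑ v ∈ B, (fire G E A v + 1)) = (∑ v ∈ B, fire G E A v) + B.card := by
    rw [Finset.sum_add_distrib]; simp
  have hB2 : (∑ v ∈ B, (E v + 1)) = (∑ v ∈ B, E v) + B.card := by
    rw [Finset.sum_add_distrib]; simp
  unfold vEx
  rw [hB1, sum_fire, hnE, hsum, hB2]
  rw [hcut] at hkey
  have h0 : (0:ℤ) ≤ cC G (A ∩ B) (univ \ (A ∪ B)) := Int.ofNat_nonneg _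
  push_cast
  push_cast at hkey
  linarith

end Stmt10Aux
namespace Stmt10Aux
open Finset
set_option linter.unusedSectionVars false
variable {V : Type*} [Fintype V] [DecidableEq V] {G : SimpleGraph V} [DecidableRel G.Adj]

lemma sum_lap_zero (f : V → ℤ) :
    ∑ v, ∑ u ∈ Finset.univ.filter (fun u => G.Adj v u), (f v - f u) = 0 := by
  classical
  have hrw : ∀ v, ∑ u ∈ Finset.univ.filter (fun u => G.Adj v u), (f v - f u)
      = ∑ u, (if G.Adj v u then f v - f u else 0) := by
    intro v; rw [Finset.sum_filter]
  rw [Finset.sum_congr rfl (fun v _ => hrw v)]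
  have key : ∀ v u : V, (if G.Adj u v then f u - f v else 0)
      = -(if G.Adj v u then f v - f u else 0) := by
    intro v u
    by_cases h : G.Adj v u
    · rw [if_pos h, if_pos h.symm]; ring
    · rw [if_neg h, if_neg (fun hc => h hc.symm)]; ring
  have hS : (∑ v, ∑ u, (if G.Adj v u then f v - f u else 0))
      = -∑ v, ∑ u, (if G.Adj v u then f v - f u else 0) := by
    conv_lhs => rw [Finset.sum_comm]
    rw [← Finset.sum_neg_distrib]
    apply Finset.sum_congr rfl
    intro v _
    rw [← Finset.sum_neg_distrib]
    apply Finset.sum_congr rfl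
    intro u _
    exact key v u
  linarith

lemma linEquiv_refl (D : V → ℤ) : LinEquiv G D D :=
  ⟨0, fun v => by simp⟩

lemma linEquiv_symm {D D' : V → ℤ} (h : LinEquiv G D D') : LinEquiv G D' D := by
  obtain ⟨f, hf⟩ := h
  refine ⟨fun v => -f v, fun v => ?_⟩
  have := hf v
  have h2 : ∑ u ∈ Finset.univ.filter (fun u => G.Adj v u), (-f v - -f u)
      = -∑ u ∈ Finset.univ.filter (fun u => G.Adj v u), (f v - f u) := by
    rw [← Finset.sum_neg_distrib]
    exact Finset.sum_congr rfl (fun u _ => by ring)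
  rw [h2]
  linarith

lemma linEquiv_trans {D D' D'' : V → ℤ} (h : LinEquiv G D D') (h' : LinEquiv G D' D'') :
    LinEquiv G D D'' := by
  obtain ⟨f, hf⟩ := h
  obtain ⟨g, hg⟩ := h'
  refine ⟨fun v => f v + g v, fun v => ?_⟩
  have h2 : ∑ u ∈ Finset.univ.filter (fun u => G.Adj v u), ((f v + g v) - (f u + g u))
      = (∑ u ∈ Finset.univ.filter (fun u => G.Adj v u), (f v - f u))
        + ∑ u ∈ Finset.univ.filter (fun u => G.Adj v u), (g v - g u) := by
    rw [← Finset.sum_add_distrib]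
    exact Finset.sum_congr rfl (fun u _ => by ring)
  rw [h2, ← hf v, ← hg v]
  ring

lemma degDiv_congr {D D' : V → ℤ} (h : LinEquiv G D D') : degDiv D = degDiv D' := by
  obtain ⟨f, hf⟩ := h
  have h1 : ∑ v, (D v - D' v) = 0 := by
    rw [Finset.sum_congr rfl (fun v _ => hf v)]
    exact sum_lap_zero f
  rw [Finset.sum_sub_distrib] at h1
  unfold degDiv
  linarith

lemma linEquiv_fire (E : V → ℤ) (A : Finset V) : LinEquiv G E (fire G E A) :=
  ⟨fun v => if v ∈ A then 1 else 0, fun v => by unfold fire; ring⟩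

lemma vEx_univ (E : V → ℤ) :
    vEx G E (univ : Finset V) = degDiv E + Fintype.card V - G.edgeFinset.card := by
  unfold vEx degDiv
  rw [nE_univ, Finset.sum_add_distrib, Finset.sum_const, Finset.card_univ]
  push_cast [nsmul_eq_mul]
  ring

lemma le_degDiv_of_effective {E : V → ℤ} (hE : ∀ v, 0 ≤ E v) (v : V) :
    E v ≤ degDiv E :=
  Finset.single_le_sum (fun u _ => hE u) (Finset.mem_univ v)

lemma exists_orientation {E : V → ℤ} (hE : ∀ v, 0 ≤ E v)
    (hfeas : ∀ A : Finset V, vEx G E A ≤ 0) :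
    ∃ O : PartialOrientation G, O.Sourceless ∧ ∀ v, O.div v = E v := by
  classical
  set c : V → ℕ := fun v => (E v).toNat + 1 with hc
  set t : (Σ v : V, Fin (c v)) → Finset (Sym2 V) := fun x => G.incidenceFinset x.1 with ht
  have hHall : ∀ (s : Finset (Σ v : V, Fin (c v))), s.card ≤ (s.biUnion t).card := by
    intro s
    set A := s.image Sigma.fst with hA
    have hb : s.biUnion t = A.biUnion (fun v => G.incidenceFinset v) := by
      ext e
      simp only [Finset.mem_biUnion, Finset.mem_image, hA, ht]
      constructor
      · rintro ⟨x, hx, he⟩; exact ⟨x.1, ⟨x, hx, rfl⟩, he⟩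
      · rintro ⟨v, ⟨x, hx, rfl⟩, he⟩; exact ⟨x, hx, he⟩
    have hb2 : A.biUnion (fun v => G.incidenceFinset v)
        = G.edgeFinset.filter (fun e => ∃ x ∈ e, x ∈ A) := by
      ext e
      simp only [Finset.mem_biUnion, SimpleGraph.incidenceFinset_eq_filter,
        Finset.mem_filter]
      tauto
    have hcard1 : s.card ≤ ∑ v ∈ A, c v := by
      have hsub : s ⊆ A.sigma (fun v => (univ : Finset (Fin (c v)))) := by
        intro x hx
        rw [Finset.mem_sigma]
        exact ⟨Finset.mem_image_of_mem _ hx, Finset.mem_univ _⟩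
      calc s.card ≤ (A.sigma (fun v => (univ : Finset (Fin (c v))))).card :=
            Finset.card_le_card hsub
        _ = ∑ v ∈ A, c v := by
            rw [Finset.card_sigma]
            exact Finset.sum_congr rfl (fun v _ => by simp)
    have hcard2 : ∑ v ∈ A, c v ≤ nE G A := by
      have := hfeas A
      unfold vEx at this
      have hcast : ((∑ v ∈ A, c v : ℕ) : ℤ) = ∑ v ∈ A, (E v + 1) := by
        push_cast
        exact Finset.sum_congr rfl (fun v _ => by
          rw [hc]; push_cast; rw [Int.toNat_of_nonneg (hE v)])
      have : ((∑ v ∈ A, c v : ℕ) : ℤ) ≤ (nE G A : ℤ) := by rw [hcast]; linarith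
      exact_mod_cast this
    rw [hb, hb2]
    exact hcard1.trans (hcard2.trans (le_of_eq rfl))
  obtain ⟨f, hfinj, hf⟩ := (Finset.all_card_le_biUnion_card_iff_existsInjective' t).mp hHall
  -- membership of v in its chosen edges
  have hmem : ∀ x : (Σ v : V, Fin (c v)), x.1 ∈ f x ∧ f x ∈ G.edgeFinset := by
    intro x
    have := hf x
    rw [ht, SimpleGraph.mem_incidenceFinset] at this
    exact ⟨this.2, SimpleGraph.mem_edgeFinset.mpr this.1⟩
  have hvm : ∀ (v : V) (i : Fin (c v)), v ∈ f ⟨v, i⟩ := fun v i => (hmem ⟨v, i⟩).1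
  have hspec : ∀ (v : V) (i : Fin (c v)), s(v, Sym2.Mem.other (hvm v i)) = f ⟨v, i⟩ :=
    fun v i => Sym2.other_spec (hvm v i)
  have hginj : ∀ (v : V) (i j : Fin (c v)),
      Sym2.Mem.other (hvm v i) = Sym2.Mem.other (hvm v j) → i = j := by
    intro v i j hij
    have : f ⟨v, i⟩ = f ⟨v, j⟩ := by rw [← hspec v i, ← hspec v j, hij]
    have := hfinj this
    simpa using this
  have hfilter : ∀ v : V, Finset.univ.filter
      (fun u => (if G.Adj u v ∧ ∃ i : Fin (c v), f ⟨v, i⟩ = s(u, v) then true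
        else false) = true)
      = Finset.image (fun i : Fin (c v) => Sym2.Mem.other (hvm v i)) Finset.univ := by
    intro v
    ext u
    simp only [Finset.mem_filter, Finset.mem_univ, true_and, Finset.mem_image]
    constructor
    · intro h
      by_cases hcnd : G.Adj u v ∧ ∃ i : Fin (c v), f ⟨v, i⟩ = s(u, v)
      · obtain ⟨hadj, i, hi⟩ := hcnd
        refine ⟨i, ?_⟩
        have : s(v, Sym2.Mem.other (hvm v i)) = s(v, u) := by
          rw [hspec v i, hi, Sym2.eq_swap]
        exact Sym2.congr_right.mp this
      · rw [if_neg hcnd] at h; cases h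
    · rintro ⟨i, rfl⟩
      have hedge : s(v, Sym2.Mem.other (hvm v i)) ∈ G.edgeFinset := by
        rw [hspec v i]; exact (hmem ⟨v, i⟩).2
      rw [SimpleGraph.mem_edgeFinset, SimpleGraph.mem_edgeSet] at hedge
      refine if_pos ⟨hedge.symm, i, ?_⟩
      rw [Sym2.eq_swap]
      exact (hspec v i).symm
  have hindeg : ∀ v : V, (Finset.univ.filter
      (fun u => (if G.Adj u v ∧ ∃ i : Fin (c v), f ⟨v, i⟩ = s(u, v) then true
        else false) = true)).card = c v := by
    intro v
    rw [hfilter v, Finset.card_image_of_injective _ (fun i j => hginj v i j)]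
    simp
  have hcv : ∀ v, ((c v : ℕ) : ℤ) = E v + 1 := by
    intro v
    rw [hc]
    push_cast
    rw [Int.toNat_of_nonneg (hE v)]
  -- the orientation
  refine ⟨⟨fun a b => if G.Adj a b ∧ ∃ i : Fin (c b), f ⟨b, i⟩ = s(a, b) then true else false,
    ?_, ?_⟩, ?_, ?_⟩
  · intro u v h
    replace h : (if G.Adj u v ∧ ∃ i : Fin (c v), f ⟨v, i⟩ = s(u, v) then true
      else false) = true := h
    by_cases hcnd : G.Adj u v ∧ ∃ i : Fin (c v), f ⟨v, i⟩ = s(u, v)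
    · exact hcnd.1
    · rw [if_neg hcnd] at h; cases h
  · intro u v h
    replace h : (if G.Adj u v ∧ ∃ i : Fin (c v), f ⟨v, i⟩ = s(u, v) then true
      else false) = true := h
    show (if G.Adj v u ∧ ∃ i : Fin (c u), f ⟨u, i⟩ = s(v, u) then true else false) = false
    by_cases hcnd : G.Adj u v ∧ ∃ i : Fin (c v), f ⟨v, i⟩ = s(u, v)
    · rw [if_neg]
      rintro ⟨hadj2, i, hi⟩
      obtain ⟨hadj, j, hj⟩ := hcnd
      have : f ⟨u, i⟩ = f ⟨v, j⟩ := by rw [hi, hj, Sym2.eq_swap]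
      have huv : u = v := congrArg Sigma.fst (hfinj this)
      exact G.irrefl (huv ▸ hadj)
    · rw [if_neg hcnd] at h; cases h
  · -- Sourceless
    intro v
    have hpos : 0 < (Finset.univ.filter
        (fun u => (if G.Adj u v ∧ ∃ i : Fin (c v), f ⟨v, i⟩ = s(u, v) then true
          else false) = true)).card := by
      rw [hindeg v, hc]
      exact Nat.succ_pos _
    obtain ⟨u, hu⟩ := Finset.card_pos.mp hpos
    exact ⟨u, (Finset.mem_filter.mp hu).2⟩
  · -- div
    intro v
    show ((Finset.univ.filter
        (fun u => (if G.Adj u v ∧ ∃ i : Fin (c v), f ⟨v, i⟩ = s(u, v) then true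
          else false) = true)).card : ℤ) - 1 = E v
    rw [hindeg v, hcv v]
    ring

end Stmt10Aux
namespace Stmt10Aux
open Finset
set_option linter.unusedSectionVars false

lemma nat_anti_stab (a : ℕ → ℕ) (h : ∀ n, a (n + 1) ≤ a n) :
    ∃ N, ∀ m, N ≤ m → a m = a N := by
  have hmono : ∀ n m, n ≤ m → a m ≤ a n := by
    intro n m hnm
    induction m, hnm using Nat.le_induction with
    | base => exact le_refl _
    | succ m hm ih => exact (h m).trans ih
  obtain ⟨N, hN⟩ : ∃ N, a N = sInf (Set.range a) := by
    have : sInf (Set.range a) ∈ Set.range a := Nat.sInf_mem ⟨a 0, 0, rfl⟩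
    obtain ⟨N, hN⟩ := this
    exact ⟨N, hN⟩
  refine ⟨N, fun m hm => le_antisymm (hmono N m hm) ?_⟩
  rw [hN]
  exact Nat.sInf_le ⟨m, rfl⟩

variable {V : Type*} [Fintype V] [DecidableEq V] {G : SimpleGraph V} [DecidableRel G.Adj]

lemma exists_feasible (hG : G.Connected) {E0 : V → ℤ} (hE0 : ∀ v, 0 ≤ E0 v)
    (hdeg : degDiv E0 + Fintype.card V ≤ G.edgeFinset.card) :
    ∃ E', LinEquiv G E0 E' ∧ (∀ v, 0 ≤ E' v) ∧ ∀ A : Finset V, vEx G E' A ≤ 0 := by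
  classical
  by_contra hcon
  have hviol : ∀ (E' : V → ℤ), LinEquiv G E0 E' → (∀ v, 0 ≤ E' v) →
      ∃ A, Viol G E' A := by
    intro E' h1 h2
    by_contra h3
    push_neg at h3
    exact hcon ⟨E', h1, h2, fun A => not_lt.mp (fun hlt => h3 A hlt)⟩
  -- states
  let St := {E' : V → ℤ // LinEquiv G E0 E' ∧ ∀ v, 0 ≤ E' v}
  have hminviol : ∀ s : St, ∃ A, Viol G s.1 A ∧ ∀ B, Viol G s.1 B → A.card ≤ B.card := by
    intro s
    obtain ⟨A0, hA0⟩ := hviol s.1 s.2.1 s.2.2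
    obtain ⟨A, hA, hAmin⟩ := Finset.exists_min_image
      ((univ : Finset (Finset V)).filter (fun B => Viol G s.1 B)) Finset.card
      ⟨A0, by simp [hA0]⟩
    rw [Finset.mem_filter] at hA
    exact ⟨A, hA.2, fun B hB => hAmin B (by simp [hB])⟩
  let pick : St → Finset V := fun s => (hminviol s).choose
  have hpick : ∀ s : St, Viol G s.1 (pick s) ∧
      ∀ B, Viol G s.1 B → (pick s).card ≤ B.card := fun s => (hminviol s).choose_spec
  let step : St → St := fun s =>
    ⟨fire G s.1 (pick s),
      linEquiv_trans s.2.1 (linEquiv_fire s.1 (pick s)),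
      fire_effective s.2.2 (hpick s).1 (hpick s).2⟩
  let seq : ℕ → St := fun n => step^[n] ⟨E0, linEquiv_refl E0, hE0⟩
  set Et : ℕ → V → ℤ := fun t => (seq t).1 with hEt
  set At : ℕ → Finset V := fun t => pick (seq t) with hAt
  have hstep : ∀ t, Et (t + 1) = fire G (Et t) (At t) := by
    intro t
    show (seq (t+1)).1 = _
    have : seq (t+1) = step (seq t) := Function.iterate_succ_apply' step t _
    rw [this]
  have hEtnn : ∀ t v, 0 ≤ Et t v := fun t => (seq t).2.2
  have hEtle : ∀ t, LinEquiv G E0 (Et t) := fun t => (seq t).2.1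
  have hdegt : ∀ t, degDiv (Et t) = degDiv E0 := fun t => (degDiv_congr (hEtle t)).symm
  have hviolt : ∀ t, Viol G (Et t) (At t) := fun t => (hpick (seq t)).1
  have hmint : ∀ t B, Viol G (Et t) B → (At t).card ≤ B.card := fun t => (hpick (seq t)).2
  have hviolt1 : ∀ t, 1 ≤ vEx G (Et t) (At t) := fun t => hviolt t
  -- the max excess
  have hPne : (univ : Finset (Finset V)).Nonempty := ⟨∅, Finset.mem_univ _⟩
  set Phi : ℕ → ℤ := fun t => (univ : Finset (Finset V)).sup' hPne (vEx G (Et t)) with hPhi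
  have hPhi_le : ∀ t B, vEx G (Et t) B ≤ Phi t := fun t B =>
    Finset.le_sup' (vEx G (Et t)) (Finset.mem_univ B)
  have hPhi_ex : ∀ t, ∃ B, vEx G (Et t) B = Phi t := by
    intro t
    obtain ⟨B, -, hB⟩ := Finset.exists_mem_eq_sup' hPne (vEx G (Et t))
    exact ⟨B, hB.symm⟩
  have hPhi_pos : ∀ t, 1 ≤ Phi t := fun t => le_trans (hviolt1 t) (hPhi_le t _)
  have hPhi_nonneg : ∀ t, 0 ≤ Phi t := fun t => le_trans zero_le_one (hPhi_pos t)
  -- L5 : the minimal violating set is contained in every maximizer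
  have hsubs : ∀ t B, vEx G (Et t) B = Phi t → At t ⊆ B := by
    intro t B hB
    have hsup := vEx_supermod (G := G) (Et t) (At t) B
    have h1 : vEx G (Et t) (At t ∪ B) ≤ Phi t := hPhi_le t (At t ∪ B)
    have h2 : 1 ≤ vEx G (Et t) (At t ∩ B) := by linarith [hviolt1 t]
    have h3 : Viol G (Et t) (At t ∩ B) := by
      have h3' : (0:ℤ) < vEx G (Et t) (At t ∩ B) := by linarith
      exact h3'
    have h4 := hmint t _ h3
    have h5 : At t ∩ B = At t :=
      Finset.eq_of_subset_of_card_le (Finset.inter_subset_left) h4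
    exact Finset.inter_eq_left.mp h5
  -- Phi is non-increasing
  have hPhi_mono : ∀ t, Phi (t + 1) ≤ Phi t := by
    intro t
    apply Finset.sup'_le
    intro B _
    rw [hstep t]
    by_cases hsub : At t ⊆ B
    · exact le_trans (vEx_fire_subset hsub) (hPhi_le t B)
    · have := vEx_fire_nsubset (hviolt t) (hmint t) hsub
      have h2 := hPhi_le t (At t ∪ B)
      linarith
  -- stabilize Phi
  obtain ⟨T0, hT0⟩ := nat_anti_stab (fun t => (Phi t).toNat)
    (fun t => Int.toNat_le_toNat (hPhi_mono t))
  have hPhiconst : ∀ t, T0 ≤ t → Phi t = Phi T0 := by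
    intro t ht
    have := hT0 t ht
    have h1 := hPhi_nonneg t
    have h2 := hPhi_nonneg T0
    omega
  -- the maximizer families
  set F : ℕ → Finset (Finset V) :=
    fun t => (univ : Finset (Finset V)).filter (fun B => vEx G (Et t) B = Phi T0) with hF
  have hFanti : ∀ t, T0 ≤ t → F (t + 1) ⊆ F t := by
    intro t ht B hB
    rw [hF, Finset.mem_filter] at hB ⊢
    refine ⟨Finset.mem_univ _, ?_⟩
    have hBt1 : vEx G (Et (t+1)) B = Phi T0 := hB.2
    by_cases hsub : At t ⊆ B
    · have hle : vEx G (Et (t+1)) B ≤ vEx G (Et t) B := by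
        rw [hstep t]; exact vEx_fire_subset hsub
      have hle2 : vEx G (Et t) B ≤ Phi t := hPhi_le t B
      rw [hPhiconst t ht] at hle2
      linarith
    · exfalso
      have h1 : vEx G (Et (t+1)) B + 1 ≤ vEx G (Et t) (At t ∪ B) := by
        rw [hstep t]; exact vEx_fire_nsubset (hviolt t) (hmint t) hsub
      have h2 := hPhi_le t (At t ∪ B)
      rw [hPhiconst t ht] at h2
      linarith
  have hFchain : ∀ s t, T0 ≤ s → s ≤ t → F t ⊆ F s := by
    intro s t hs hst
    induction t, hst using Nat.le_induction with
    | base => exact fun _ h => h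
    | succ t ht ih => exact subset_trans (hFanti t (le_trans hs ht)) ih
  obtain ⟨T1', hT1'⟩ := nat_anti_stab (fun t => (F (T0 + t)).card)
    (fun t => Finset.card_le_card (by
      have : T0 + (t+1) = (T0 + t) + 1 := by ring
      rw [this]
      exact hFanti (T0 + t) (Nat.le_add_right _ _)))
  set T1 := T0 + T1' with hT1
  have hT0T1 : T0 ≤ T1 := Nat.le_add_right _ _
  have hFconst : ∀ t, T1 ≤ t → F t = F T1 := by
    intro t ht
    have hsubF : F t ⊆ F T1 := hFchain T1 t hT0T1 ht
    have hcards : (F T1).card ≤ (F t).card := by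
      obtain ⟨k, hk⟩ := Nat.exists_eq_add_of_le ht
      have := hT1' (T1' + k) (Nat.le_add_right _ _)
      have heq : T0 + (T1' + k) = t := by omega
      rw [heq] at this
      omega
    exact Finset.eq_of_subset_of_card_le hsubF hcards
  -- a common maximizer
  obtain ⟨Bs, hBs⟩ := hPhi_ex T1
  rw [hPhiconst T1 hT0T1] at hBs
  have hBsF : Bs ∈ F T1 := by rw [hF, Finset.mem_filter]; exact ⟨Finset.mem_univ _, hBs⟩
  have hBsmax : ∀ t, T1 ≤ t → At t ⊆ Bs := by
    intro t ht
    have : Bs ∈ F t := by rw [hFconst t ht]; exact hBsF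
    rw [hF, Finset.mem_filter] at this
    apply hsubs t
    rw [this.2, hPhiconst t (le_trans hT0T1 ht)]
  have hBs_ne : Bs ≠ univ := by
    intro h
    have h1 : vEx G (Et T1) univ ≤ 0 := by
      rw [vEx_univ, hdegt T1]
      push_cast
      push_cast at hdeg
      linarith
    rw [h] at hBs
    have := hPhi_pos T0
    linarith
  obtain ⟨w0, hw0⟩ : ∃ w0, w0 ∉ Bs := by
    by_contra h
    push_neg at h
    exact hBs_ne (Finset.eq_univ_iff_forall.mpr h)
  -- vertices that eventually stop firing
  set Stops : Set V := {w | ∃ T, ∀ t, T ≤ t → w ∉ At t} with hStops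
  have hw0S : w0 ∈ Stops := ⟨T1, fun t ht hw => hw0 (hBsmax t ht hw)⟩
  have hEmono : ∀ (w : V) (T : ℕ), (∀ t, T ≤ t → w ∉ At t) →
      ∀ s t, T ≤ s → s ≤ t → Et s w ≤ Et t w := by
    intro w T hT s t hs hst
    induction t, hst using Nat.le_induction with
    | base => exact le_refl _
    | succ t ht ih =>
      have h1 : Et (t+1) w = Et t w + (cC G {w} (At t) : ℤ) := by
        rw [hstep t]
        exact fire_out_eq (hT t (le_trans hs ht)) (Et t)
      have h2 : (0:ℤ) ≤ cC G {w} (At t) := Int.ofNat_nonneg _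
      linarith
  have hkey : ∀ u w, G.Adj u w → w ∈ Stops → u ∈ Stops := by
    intro u w hadj hw
    obtain ⟨T, hT⟩ := hw
    by_contra hu
    rw [hStops, Set.mem_setOf_eq] at hu
    push_neg at hu
    have hgrow : ∀ k : ℕ, ∃ t, T ≤ t ∧ Et T w + k ≤ Et t w := by
      intro k
      induction k with
      | zero => exact ⟨T, le_refl _, by simp⟩
      | succ k ih =>
        obtain ⟨t, hTt, hk⟩ := ih
        obtain ⟨t', ht', hu'⟩ := hu t
        have hmono := hEmono w T hT t t' hTt ht'
        have hinc : Et t' w + 1 ≤ Et (t'+1) w := by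
          have h1 : Et (t'+1) w = Et t' w + (cC G {w} (At t') : ℤ) := by
            rw [hstep t']
            exact fire_out_eq (hT t' (le_trans hTt ht')) (Et t')
          have h2 : 1 ≤ cC G {w} (At t') := by
            rw [cC_singleton]
            apply Finset.card_pos.mpr
            exact ⟨u, Finset.mem_filter.mpr ⟨hu', hadj.symm⟩⟩
          have h2' : (1:ℤ) ≤ (cC G {w} (At t') : ℤ) := by exact_mod_cast h2
          linarith
        refine ⟨t' + 1, le_trans hTt (le_trans ht' (Nat.le_succ _)), ?_⟩
        push_cast
        linarith
    obtain ⟨t, hTt, hk⟩ := hgrow (degDiv E0 - Et T w + 1).toNat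
    have hbound : Et t w ≤ degDiv E0 := by
      rw [← hdegt t]
      exact le_degDiv_of_effective (hEtnn t) w
    have hcast : degDiv E0 - Et T w + 1 ≤ ((degDiv E0 - Et T w + 1).toNat : ℤ) :=
      Int.self_le_toNat _
    linarith
  have hall : ∀ w, w ∈ Stops := by
    have hwalk : ∀ (x y : V), G.Walk x y → x ∈ Stops → y ∈ Stops := by
      intro x y p
      induction p with
      | nil => exact fun h => h
      | cons h q ih => exact fun hx => ih (hkey _ _ h.symm hx)
    intro w
    obtain ⟨p⟩ := hG.preconnected w0 w
    exact hwalk w0 w p hw0S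
  choose T hTs using hall
  set Tm := (univ : Finset V).sup T with hTm
  obtain ⟨w, hw⟩ := viol_nonempty (hviolt Tm)
  exact hTs w Tm (Finset.le_sup (Finset.mem_univ w)) hw

end Stmt10Aux
namespace Stmt10Aux
open Finset
set_option linter.unusedSectionVars false
variable {V : Type*} [Fintype V] [DecidableEq V] {G : SimpleGraph V} [DecidableRel G.Adj]

lemma rank_bridge_fwd {D : V → ℤ} (h : 0 ≤ divisorRank G D) :
    ∃ E', EffectiveDiv E' ∧ LinEquiv G D E' := by
  classical
  unfold divisorRank at h
  have h0 : (0 : ℕ) ∉ {n : ℕ | ∃ E : V → ℤ, EffectiveDiv E ∧ degDiv E = (n : ℤ) ∧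
      ¬ ∃ E' : V → ℤ, EffectiveDiv E' ∧ LinEquiv G (fun v => D v - E v) E'} := by
    intro h0
    have h1 : sInf {n : ℕ | ∃ E : V → ℤ, EffectiveDiv E ∧ degDiv E = (n : ℤ) ∧
        ¬ ∃ E' : V → ℤ, EffectiveDiv E' ∧ LinEquiv G (fun v => D v - E v) E'} = 0 :=
      Nat.le_zero.mp (Nat.sInf_le h0)
    rw [h1] at h
    norm_num at h
  rw [Set.mem_setOf_eq] at h0
  push_neg at h0
  obtain ⟨E', hE'eff, hE'lin⟩ := h0 (fun _ => 0) (fun v => le_refl 0) (by simp [degDiv])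
  refine ⟨E', hE'eff, ?_⟩
  have heq : (fun v => D v - (fun _ => (0:ℤ)) v) = D := by funext v; simp
  rwa [heq] at hE'lin

lemma rank_bridge_bwd (hV : Nonempty V) {D E' : V → ℤ}
    (hE' : EffectiveDiv E') (hlin : LinEquiv G D E') : 0 ≤ divisorRank G D := by
  classical
  unfold divisorRank
  set S := {n : ℕ | ∃ E : V → ℤ, EffectiveDiv E ∧ degDiv E = (n : ℤ) ∧
      ¬ ∃ E'' : V → ℤ, EffectiveDiv E'' ∧ LinEquiv G (fun v => D v - E v) E''} with hS
  have hSne : S.Nonempty := by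
    obtain ⟨v0⟩ := hV
    set n : ℕ := (degDiv D).toNat + 1 with hn
    refine ⟨n, (fun v => if v = v0 then (n:ℤ) else 0), fun v => by positivity, ?_, ?_⟩
    · rw [degDiv, Finset.sum_ite_eq' univ v0 (fun _ => (n:ℤ))]
      simp
    · rintro ⟨E'', hE''eff, f, hf⟩
      have hdeg'' : degDiv (fun v => D v - (if v = v0 then (n:ℤ) else 0)) = degDiv E'' := by
        apply degDiv_congr (G := G)
        exact ⟨f, hf⟩
      have h1 : degDiv (fun v => D v - (if v = v0 then (n:ℤ) else 0))
          = degDiv D - n := by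
        unfold degDiv
        rw [Finset.sum_sub_distrib, Finset.sum_ite_eq' univ v0 (fun _ => (n:ℤ))]
        simp
      have h2 : 0 ≤ degDiv E'' := Finset.sum_nonneg (fun v _ => hE''eff v)
      have h3 : degDiv D ≤ ((degDiv D).toNat : ℤ) := Int.self_le_toNat _
      rw [h1] at hdeg''
      rw [hn] at hdeg''
      push_cast at hdeg''
      linarith
  have h0 : sInf S ≠ 0 := by
    intro h
    have hmem := Nat.sInf_mem hSne
    rw [h] at hmem
    obtain ⟨E, hEeff, hEdeg, hno⟩ := hmem
    have hE0 : ∀ v, E v = 0 := by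
      intro v
      have h1 : E v ≤ degDiv E := le_degDiv_of_effective hEeff v
      have h2 := hEeff v
      rw [hEdeg] at h1
      simp at h1
      omega
    apply hno
    refine ⟨E', hE', ?_⟩
    have heq : (fun v => D v - E v) = D := by funext v; rw [hE0 v]; ring
    rwa [heq]
  have h1 : 1 ≤ sInf S := Nat.pos_of_ne_zero h0
  have h2 : (1:ℤ) ≤ ((sInf S : ℕ) : ℤ) := by exact_mod_cast h1
  linarith

end Stmt10Aux

/-- For `deg D ≤ g - 1`, `r(D) ≥ 0` iff `D` is linearly equivalent
to the divisor of a sourceless partial orientation. -/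
theorem stmt10 {V : Type*} [Fintype V] [DecidableEq V] (G : SimpleGraph V)
    [DecidableRel G.Adj] (hG : G.Connected)
    (D : V → ℤ) (hD : degDiv D ≤ graphGenus G - 1) :
    0 ≤ divisorRank G D ↔
      ∃ O : PartialOrientation G, O.Sourceless ∧ LinEquiv G D O.div := by
  classical
  constructor
  · intro hrank
    obtain ⟨E', hE'eff, hDlin⟩ := Stmt10Aux.rank_bridge_fwd hrank
    have hdeg' : degDiv E' + (Fintype.card V : ℤ) ≤ (G.edgeFinset.card : ℤ) := by
      have h1 : degDiv E' = degDiv D := (Stmt10Aux.degDiv_congr hDlin).symm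
      unfold graphGenus at hD
      linarith
    obtain ⟨E'', hlin2, heff2, hfeas2⟩ := Stmt10Aux.exists_feasible hG hE'eff hdeg'
    obtain ⟨O, hOsrc, hOdiv⟩ := Stmt10Aux.exists_orientation heff2 hfeas2
    refine ⟨O, hOsrc, ?_⟩
    have hfin : LinEquiv G D E'' := Stmt10Aux.linEquiv_trans hDlin hlin2
    have hfun : O.div = E'' := funext hOdiv
    rw [hfun]
    exact hfin
  · rintro ⟨O, hOsrc, hOlin⟩
    have heffO : EffectiveDiv O.div := by
      intro v
      obtain ⟨u, hu⟩ := hOsrc v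
      have hpos : 0 < O.indeg v :=
        Finset.card_pos.mpr ⟨u, Finset.mem_filter.mpr ⟨Finset.mem_univ u, hu⟩⟩
      unfold PartialOrientation.div
      omega
    exact Stmt10Aux.rank_bridge_bwd hG.nonempty heffO hOlin
end

section
/- Let G be a finite connected simple graph and q a vertex of G. Every full orientation of G is equivalent in the cocycle reversal system (i.e., by a finite sequence of cocycle reversals among full orientations) to a q-connected full orientation. -/
/-- The set of vertices reachable from `q` in a partial orientation. -/
private def reachSet {V : Type*} {G : SimpleGraph V} (O : PartialOrientation G) (q : V) :
    Set V :=
  {v | Relation.ReflTransGen (fun a b => O.dir a b = true) q v}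

private lemma cross_of_walk {V : Type*} {G : SimpleGraph V} {S : Set V} {x y : V}
    (p : G.Walk x y) (hy : y ∉ S) :
    x ∈ S → ∃ a b, a ∈ S ∧ b ∉ S ∧ G.Adj a b := by
  induction p with
  | nil => exact fun hx => absurd hx hy
  | @cons u v w h p ih =>
      intro hx
      by_cases hv : v ∈ S
      · exact ih hy hv
      · exact ⟨u, v, hx, hv, h⟩

private lemma step_lemma_s11 {V : Type*} [Fintype V] {G : SimpleGraph V}
    (hG : G.Connected) (q : V) (O : PartialOrientation G) (hO : O.IsFull)
    (hne : ∃ v, v ∉ reachSet O q) :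
    ∃ O' : PartialOrientation G, PartialOrientation.CocycleReversal O O' ∧ O'.IsFull ∧
      reachSet O q ⊆ reachSet O' q ∧ ∃ w, w ∈ reachSet O' q ∧ w ∉ reachSet O q := by
  classical
  set S := reachSet O q with hSdef
  have hq : q ∈ S := Relation.ReflTransGen.refl
  have hcut : ∀ u v, G.Adj u v → u ∉ S → v ∈ S → O.dir u v = true := by
    intro u v hadj hu hv
    rcases hO u v hadj with h | h
    · exact h
    · exact absurd (hv.tail h) hu
  let d : V → V → Bool := fun a b =>
    if a ∈ S ∧ b ∉ S then O.dir b a else if (a ∈ S ↔ b ∈ S) then O.dir a b else false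
  have hd : ∀ a b, d a b = true ↔
      ((a ∈ S ∧ b ∉ S ∧ O.dir b a = true) ∨ ((a ∈ S ↔ b ∈ S) ∧ O.dir a b = true)) := by
    intro a b
    by_cases h1 : a ∈ S ∧ b ∉ S
    · have h2 : ¬ (a ∈ S ↔ b ∈ S) := fun h => h1.2 (h.mp h1.1)
      simp only [d, if_pos h1, if_neg h2]
      tauto
    · simp only [d, if_neg h1]
      by_cases h2 : (a ∈ S ↔ b ∈ S)
      · simp only [if_pos h2]
        tauto
      · simp only [if_neg h2]
        tauto
  let O' : PartialOrientation G :=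
    { dir := d
      adj_of_dir := by
        intro a b h
        rw [hd] at h
        rcases h with ⟨_, _, h⟩ | ⟨_, h⟩
        · exact (O.adj_of_dir b a h).symm
        · exact O.adj_of_dir a b h
      not_both := by
        intro a b h
        rw [hd] at h
        by_contra hba
        rw [Bool.not_eq_false, hd] at hba
        rcases h with ⟨ha, hb, h⟩ | ⟨hiff, h⟩
        · rcases hba with ⟨hb', ha', _⟩ | ⟨hiff', _⟩
          · exact hb hb'
          · exact hb (hiff'.mpr ha)
        · rcases hba with ⟨hb', ha', _⟩ | ⟨_, h'⟩
          · exact ha' (hiff.mpr hb')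
          · exact absurd h' (by rw [O.not_both a b h]; simp) }
  have hfull : O'.IsFull := by
    intro a b hadj
    show d a b = true ∨ d b a = true
    rw [hd, hd]
    by_cases ha : a ∈ S <;> by_cases hb : b ∈ S
    · rcases hO a b hadj with h | h
      · left; right; exact ⟨by tauto, h⟩
      · right; right; exact ⟨by tauto, h⟩
    · left; left; exact ⟨ha, hb, hcut b a hadj.symm hb ha⟩
    · right; left; exact ⟨hb, ha, hcut a b hadj ha hb⟩
    · rcases hO a b hadj with h | h
      · left; right; exact ⟨by tauto, h⟩
      · right; right; exact ⟨by tauto, h⟩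
  have hsub : ∀ v, v ∈ S → v ∈ reachSet O' q := by
    intro v hv
    induction hv with
    | refl => exact Relation.ReflTransGen.refl
    | @tail b c hb hbc ih =>
        have hbS : b ∈ S := hb
        have hcS : c ∈ S := hb.tail hbc
        have : d b c = true := (hd b c).mpr (Or.inr ⟨by tauto, hbc⟩)
        exact ih.tail this
  obtain ⟨v, hv⟩ := hne
  obtain ⟨a, b, ha, hb, hadj⟩ := cross_of_walk (hG.preconnected q v).some hv hq
  have hab : d a b = true := (hd a b).mpr (Or.inl ⟨ha, hb, hcut b a hadj.symm hb ha⟩)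
  refine ⟨O', ⟨S, hcut, hd⟩, hfull, hsub, b, (hsub a ha).tail hab, hb⟩

/-- Every full orientation is equivalent in the cocycle reversal
system to a `q`-connected full orientation. -/
theorem stmt11 {V : Type*} [Fintype V] [DecidableEq V] (G : SimpleGraph V)
    [DecidableRel G.Adj] (hG : G.Connected)
    (q : V) (O : PartialOrientation G) (hO : O.IsFull) :
    ∃ O' : PartialOrientation G,
      PartialOrientation.CocycleEquiv O O' ∧ O'.IsFull ∧ O'.QConnected q := by
  classical
  suffices h : ∀ k (O : PartialOrientation G), O.IsFull → ((reachSet O q)ᶜ.ncard ≤ k) →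
      ∃ O' : PartialOrientation G,
        PartialOrientation.CocycleEquiv O O' ∧ O'.IsFull ∧ O'.QConnected q by
    exact h ((reachSet O q)ᶜ.ncard) O hO le_rfl
  intro k
  induction k with
  | zero =>
      intro O hO hcard
      have hempty : (reachSet O q)ᶜ = ∅ := by
        rw [← Set.ncard_eq_zero (Set.toFinite _)]
        omega
      refine ⟨O, Relation.ReflTransGen.refl, hO, fun v => ?_⟩
      have : v ∈ reachSet O q := by
        by_contra hv
        exact absurd (hempty ▸ hv : v ∈ (∅ : Set V)) (Set.notMem_empty v)
      exact this
  | succ k ih =>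
      intro O hO hcard
      by_cases hall : ∀ v, v ∈ reachSet O q
      · exact ⟨O, Relation.ReflTransGen.refl, hO, fun v => hall v⟩
      · push_neg at hall
        obtain ⟨O'', h1, h2, h3, w, hw1, hw2⟩ := step_lemma_s11 hG q O hO hall
        have hss : (reachSet O'' q)ᶜ ⊂ (reachSet O q)ᶜ := by
          refine (Set.compl_subset_compl.mpr h3).ssubset_of_ne ?_
          intro hcon
          exact (hcon ▸ (hw2 : w ∈ (reachSet O q)ᶜ) : w ∈ (reachSet O'' q)ᶜ) hw1
        have hlt := Set.ncard_lt_ncard hss (Set.toFinite _)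
        obtain ⟨O', hc, hf, hqc⟩ := ih O'' h2 (by omega)
        exact ⟨O', Relation.ReflTransGen.head h1 hc, hf, hqc⟩
end
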